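/- arXiv:2405.05859 — 9 statements merged into one kernel-verified Lean document; each statement's English description precedes it below -/
import Mathlib

section
/- Let P be a Poisson algebra and A an abelian subalgebra of maximal dimension among abelian subalgebras. If A is an ideal of the underlying Lie algebra P_L, then A is an ideal of P (i.e., also an ideal for the commutative product). -/
/-!
Adjoining to `A` an element `c` that annihilates `A` and itself under both products gives an
abelian subalgebra `A + F c`, so maximality of `dim A` forces `c ∈ A`. For `a ∈ A` and any `x`,
the element `c = a · x` qualifies: `b · (a · x) = (b · a) · x = 0`, the Leibniz rule gives
`[a · x, b] = [a, b] · x + a · [x, b] = 0` because `A` is a Lie ideal, and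
`(a · x) · (a · x) = (a · a) · (x · x) = 0`.
-/

variable {F : Type*} [Field F] {P : Type*} [AddCommGroup P] [Module F P]

/-- A subalgebra of a dialgebra (subspace closed under both products). -/
def IsSubalg (mul br : P →ₗ[F] P →ₗ[F] P) (A : Submodule F P) : Prop :=
  ∀ x ∈ A, ∀ y ∈ A, mul x y ∈ A ∧ br x y ∈ A

/-- An ideal of a dialgebra. -/
def IsIdeal (mul br : P →ₗ[F] P →ₗ[F] P) (A : Submodule F P) : Prop :=
  ∀ x ∈ A, ∀ y : P, mul x y ∈ A ∧ mul y x ∈ A ∧ br x y ∈ A ∧ br y x ∈ A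

/-- An abelian subspace: all products of its elements vanish. -/
def IsAbelian (mul br : P →ₗ[F] P →ₗ[F] P) (A : Submodule F P) : Prop :=
  ∀ x ∈ A, ∀ y ∈ A, mul x y = 0 ∧ br x y = 0

def Centralizes (mul br : P →ₗ[F] P →ₗ[F] P) (A : Submodule F P) (c : P) : Prop :=
  ∀ b ∈ A, mul b c = 0 ∧ mul c b = 0 ∧ br b c = 0 ∧ br c b = 0

section Dialgebra

variable {mul br : P →ₗ[F] P →ₗ[F] P} {A : Submodule F P} {c : P}

theorem IsAbelian.isSubalg (hA : IsAbelian mul br A) : IsSubalg mul br A := by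
  intro x hx y hy
  rw [(hA x hx y hy).1, (hA x hx y hy).2]
  exact ⟨A.zero_mem, A.zero_mem⟩

theorem IsAbelian.sup_span_singleton (hA : IsAbelian mul br A) (hc : Centralizes mul br A c)
    (hmul : mul c c = 0) (hbr : br c c = 0) : IsAbelian mul br (A ⊔ Submodule.span F {c}) := by
  have hmem : ∀ u ∈ A ⊔ Submodule.span F {c}, ∃ b ∈ A, ∃ t : F, u = b + t • c := by
    intro u hu
    obtain ⟨b, hb, z, hz, rfl⟩ := Submodule.mem_sup.1 hu
    obtain ⟨t, rfl⟩ := Submodule.mem_span_singleton.1 hz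
    exact ⟨b, hb, t, rfl⟩
  intro u hu v hv
  obtain ⟨b₁, hb₁, t₁, rfl⟩ := hmem u hu
  obtain ⟨b₂, hb₂, t₂, rfl⟩ := hmem v hv
  obtain ⟨hmul₁, -, hbr₁, -⟩ := hc b₁ hb₁
  obtain ⟨-, hmul₂, -, hbr₂⟩ := hc b₂ hb₂
  constructor <;>
    simp [(hA b₁ hb₁ b₂ hb₂).1, (hA b₁ hb₁ b₂ hb₂).2, hmul₁, hmul₂, hbr₁, hbr₂, hmul, hbr]

theorem mem_of_centralizes [FiniteDimensional F P]
    (hmax : ∀ B : Submodule F P, IsSubalg mul br B → IsAbelian mul br B →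
      Module.finrank F B ≤ Module.finrank F A)
    (hA : IsAbelian mul br A) (hc : Centralizes mul br A c) (hmul : mul c c = 0)
    (hbr : br c c = 0) : c ∈ A := by
  have hB := hA.sup_span_singleton hc hmul hbr
  have hAB : A = A ⊔ Submodule.span F {c} :=
    Submodule.eq_of_le_of_finrank_le le_sup_left (hmax _ hB.isSubalg hB)
  rw [hAB]
  exact Submodule.mem_sup_right (Submodule.mem_span_singleton_self c)

end Dialgebra

section Poisson

variable {mul br : P →ₗ[F] P →ₗ[F] P}

theorem mul_mul_mul_comm_of_comm_of_assoc (hcomm : ∀ x y, mul x y = mul y x)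
    (hassoc : ∀ x y z, mul (mul x y) z = mul x (mul y z)) (a b c d : P) :
    mul (mul a b) (mul c d) = mul (mul a c) (mul b d) := by
  rw [hassoc, ← hassoc b, hcomm b c, hassoc c, ← hassoc]

theorem centralizes_mul_of_mem {A : Submodule F P} (hcomm : ∀ x y, mul x y = mul y x)
    (hassoc : ∀ x y z, mul (mul x y) z = mul x (mul y z)) (hskew : ∀ x, br x x = 0)
    (hleib : ∀ x y z, br (mul x y) z = mul (br x z) y + mul x (br y z))
    (hA : IsAbelian mul br A) (hlie : ∀ a ∈ A, ∀ x : P, br a x ∈ A ∧ br x a ∈ A)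
    {a : P} (ha : a ∈ A) (x : P) : Centralizes mul br A (mul a x) := by
  intro b hb
  have hmul : mul b (mul a x) = 0 := by
    rw [← hassoc, (hA b hb a ha).1, map_zero, LinearMap.zero_apply]
  have hbr : br (mul a x) b = 0 := by
    rw [hleib, (hA a ha b hb).2, (hA a ha _ (hlie b hb x).2).1, map_zero, LinearMap.zero_apply,
      add_zero]
  exact ⟨hmul, hcomm (mul a x) b ▸ hmul, (LinearMap.IsAlt.eq_iff hskew).1 hbr, hbr⟩

end Poisson

theorem abelian_max_lieIdeal_isIdeal_general [FiniteDimensional F P]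
    (mul br : P →ₗ[F] P →ₗ[F] P)
    (hcomm : ∀ x y, mul x y = mul y x)
    (hassoc : ∀ x y z, mul (mul x y) z = mul x (mul y z))
    (hskew : ∀ x, br x x = 0)
    (hleib : ∀ x y z, br (mul x y) z = mul (br x z) y + mul x (br y z))
    (A : Submodule F P) (hab : IsAbelian mul br A)
    (hmax : ∀ B : Submodule F P, IsSubalg mul br B → IsAbelian mul br B →
      Module.finrank F B ≤ Module.finrank F A)
    (hlie : ∀ a ∈ A, ∀ x : P, br a x ∈ A ∧ br x a ∈ A) :
    IsIdeal mul br A := by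
  intro a ha x
  have hsquare : mul (mul a x) (mul a x) = 0 := by
    rw [mul_mul_mul_comm_of_comm_of_assoc hcomm hassoc, (hab a ha a ha).1, map_zero,
      LinearMap.zero_apply]
  have hax : mul a x ∈ A :=
    mem_of_centralizes hmax hab (centralizes_mul_of_mem hcomm hassoc hskew hleib hab hlie ha x)
      hsquare (hskew _)
  exact ⟨hax, hcomm x a ▸ hax, hlie a ha x⟩

/-- If `A` is an abelian subalgebra of maximal dimension of a Poisson algebra
and `A` is an ideal of the underlying Lie algebra, then `A` is an ideal of the
Poisson algebra. -/
theorem abelian_max_lieIdeal_isIdeal [FiniteDimensional F P]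
    (mul br : P →ₗ[F] P →ₗ[F] P)
    (hcomm : ∀ x y, mul x y = mul y x)
    (hassoc : ∀ x y z, mul (mul x y) z = mul x (mul y z))
    (hskew : ∀ x, br x x = 0)
    (hjac : ∀ x y z, br (br x y) z + br (br y z) x + br (br z x) y = 0)
    (hleib : ∀ x y z, br (mul x y) z = mul (br x z) y + mul x (br y z))
    (A : Submodule F P) (hab : IsAbelian mul br A)
    (hmax : ∀ B : Submodule F P, IsSubalg mul br B → IsAbelian mul br B →
      Module.finrank F B ≤ Module.finrank F A)
    (hlie : ∀ a ∈ A, ∀ x : P, br a x ∈ A ∧ br x a ∈ A) :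
    IsIdeal mul br A :=
  abelian_max_lieIdeal_isIdeal_general mul br hcomm hassoc hskew hleib A hab hmax hlie
end

section
/- Every finite-dimensional Poisson algebra P over a field has a one-dimensional subalgebra (a subspace spanned by a single element closed under both products). -/
variable {F : Type*} [Field F] {P : Type*} [AddCommGroup P] [Module F P]

/-!
It suffices to find `v ≠ 0` with `v * v ∈ F v`, since `[v, v] = 0`. Pick `a ≠ 0` and let
`L = (a * ·)`, so that `Lⁿ a = aⁿ⁺¹`. The ranges of the powers of `L` stabilise, say from `n` on.
If `aⁿ⁺¹ = 0`, the last nonzero power `v = aʲ` has `v * v = 0`. Otherwise `u = aⁿ⁺¹` lies in the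
range of `(u * ·)² = L²ⁿ⁺²`, i.e. `u = u² c`, and `e = u c` is a nonzero idempotent.
-/

theorem Module.End.exists_pow_apply_ne_zero_and_apply_eq_zero {R M : Type*} [Semiring R]
    [AddCommMonoid M] [Module R M] {f : Module.End R M} {x : M} {n : ℕ}
    (hx : x ≠ 0) (hn : (f ^ n) x = 0) : ∃ j, (f ^ j) x ≠ 0 ∧ f ((f ^ j) x) = 0 := by
  by_contra! h
  refine (Nat.rec (by simpa using hx) (fun j hj ↦ ?_) n : (f ^ n) x ≠ 0) hn
  rw [pow_succ', Module.End.mul_apply]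
  exact h j hj

theorem isSubalg_span_singleton (mul br : P →ₗ[F] P →ₗ[F] P) {v : P}
    (hmul : mul v v ∈ Submodule.span F {v}) (hbr : br v v ∈ Submodule.span F {v}) :
    IsSubalg mul br (Submodule.span F {v}) := by
  intro x hx y hy
  obtain ⟨a, rfl⟩ := Submodule.mem_span_singleton.mp hx
  obtain ⟨b, rfl⟩ := Submodule.mem_span_singleton.mp hy
  simp only [map_smul, LinearMap.smul_apply]
  exact ⟨Submodule.smul_mem _ _ (Submodule.smul_mem _ _ hmul),
    Submodule.smul_mem _ _ (Submodule.smul_mem _ _ hbr)⟩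

section CommAssoc

variable {mul : P →ₗ[F] P →ₗ[F] P} (hcomm : ∀ x y, mul x y = mul y x)
  (hassoc : ∀ x y z, mul (mul x y) z = mul x (mul y z))
include hcomm hassoc

theorem commute_mul (a b : P) : Commute (mul a) (mul b) :=
  LinearMap.ext fun x ↦ by
    simp only [Module.End.mul_apply, ← hassoc, hcomm a b]

theorem mul_pow_apply (a x : P) (n : ℕ) : mul ((mul a ^ n) x) = mul a ^ n * mul x :=
  LinearMap.ext fun z ↦ by
    rw [hcomm, ← Module.End.mul_apply, ((commute_mul hcomm hassoc z a).pow_right n).eq,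
      Module.End.mul_apply, Module.End.mul_apply, hcomm]

theorem exists_ne_zero_mul_self_eq_zero {a : P} {n : ℕ} (ha : a ≠ 0) (hn : (mul a ^ n) a = 0) :
    ∃ v ≠ 0, mul v v = 0 := by
  obtain ⟨j, hj, hj1⟩ := Module.End.exists_pow_apply_ne_zero_and_apply_eq_zero ha hn
  refine ⟨(mul a ^ j) a, hj, ?_⟩
  rw [mul_pow_apply hcomm hassoc, Module.End.mul_apply, hj1, map_zero]

theorem exists_ne_zero_mul_self_eq_self {u c : P} (hu : u ≠ 0) (hc : mul u (mul u c) = u) :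
    ∃ e ≠ 0, mul e e = e := by
  have hee : mul (mul u c) (mul u c) = mul u c := by
    rw [hassoc, hcomm c, ← hassoc u (mul u c), hc]
  have heu : mul (mul u c) u = u := by rw [hcomm, hc]
  refine ⟨mul u c, fun h ↦ hu ?_, hee⟩
  rw [← heu, h, map_zero, LinearMap.zero_apply]

theorem exists_ne_zero_mul_self_mem_span_singleton [FiniteDimensional F P] [Nontrivial P] :
    ∃ v ≠ 0, mul v v ∈ Submodule.span F {v} := by
  obtain ⟨a, ha⟩ := exists_ne (0 : P)
  obtain ⟨n, hn⟩ := IsArtinian.monotone_stabilizes (mul a).iterateRange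
  by_cases hu : (mul a ^ n) a = 0
  · obtain ⟨v, hv, hvv⟩ := exists_ne_zero_mul_self_eq_zero hcomm hassoc ha hu
    exact ⟨v, hv, hvv ▸ Submodule.zero_mem _⟩
  have hsq : mul ((mul a ^ n) a) ^ 2 = mul a ^ ((n + 1) * 2) := by
    rw [mul_pow_apply hcomm hassoc, ← pow_succ, pow_mul]
  have hrange : LinearMap.range (mul a ^ n) = LinearMap.range (mul a ^ ((n + 1) * 2)) :=
    hn _ (by omega)
  obtain ⟨c, hc⟩ := hrange ▸ LinearMap.mem_range_self (mul a ^ n) a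
  rw [← hsq, sq, Module.End.mul_apply] at hc
  obtain ⟨e, he, hee⟩ := exists_ne_zero_mul_self_eq_self hcomm hassoc hu hc
  exact ⟨e, he, by rw [hee]; exact Submodule.mem_span_singleton_self e⟩

end CommAssoc

theorem exists_one_dim_subalgebra_general [FiniteDimensional F P] [Nontrivial P]
    (mul br : P →ₗ[F] P →ₗ[F] P)
    (hcomm : ∀ x y, mul x y = mul y x)
    (hassoc : ∀ x y z, mul (mul x y) z = mul x (mul y z))
    (hskew : ∀ x, br x x = 0) :
    ∃ A : Submodule F P, IsSubalg mul br A ∧ Module.finrank F A = 1 := by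
  obtain ⟨v, hv, hvv⟩ := exists_ne_zero_mul_self_mem_span_singleton hcomm hassoc
  refine ⟨Submodule.span F {v}, isSubalg_span_singleton mul br hvv ?_, finrank_span_singleton hv⟩
  rw [hskew]
  exact Submodule.zero_mem _

/-- Every (nonzero) finite-dimensional Poisson algebra has a one-dimensional
subalgebra. -/
theorem exists_one_dim_subalgebra [FiniteDimensional F P] [Nontrivial P]
    (mul br : P →ₗ[F] P →ₗ[F] P)
    (hcomm : ∀ x y, mul x y = mul y x)
    (hassoc : ∀ x y z, mul (mul x y) z = mul x (mul y z))
    (hskew : ∀ x, br x x = 0)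
    (hjac : ∀ x y z, br (br x y) z + br (br y z) x + br (br z x) y = 0)
    (hleib : ∀ x y z, br (mul x y) z = mul (br x z) y + mul x (br y z)) :
    ∃ A : Submodule F P, IsSubalg mul br A ∧ Module.finrank F A = 1 :=
  exists_one_dim_subalgebra_general mul br hcomm hassoc hskew
end

section
/- Let P be a finite-dimensional Poisson algebra over an algebraically closed field. If P has a maximal subalgebra A which is abelian, then A has codimension one in P. -/
/-!
For `a ∈ A` the maps `x ↦ a x` and `x ↦ [x, a]` descend to `P ⧸ A` and commute there because `A` is
abelian, so they have a common eigenvector `v + A`. Since `(a a) v = 0`, the eigenvalues of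
multiplication vanish: `A v ⊆ A` and `[v, a] ∈ F v + A`. The span `S` of `v, v², v³, …` is closed
under multiplication, has zero bracket, and satisfies `A S ⊆ A` and `[S, A] ⊆ A + S`; hence
`A + v S` is a subalgebra. If `v S ⊆ A`, then `A + F v` is a subalgebra. Otherwise maximality gives
`A + v S = P`, so multiplication by `v` is onto, hence injective, on `P ⧸ A`; writing `v ≡ v u`
yields `u² ≡ u` and `[u, A] ⊆ A`, so `A + F u` is a subalgebra. Either way maximality makes `P` the
sum of `A` and a line.
-/

variable {F : Type*} [Field F] {P : Type*} [AddCommGroup P] [Module F P]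

open Module Submodule

theorem Module.End.exists_forall_apply_eq_smul_of_commute {K V : Type*} [Field K] [IsAlgClosed K]
    [AddCommGroup V] [Module K V] [FiniteDimensional K V] [Nontrivial V] (s : Set (End K V))
    (hs : ∀ f ∈ s, ∀ g ∈ s, Commute f g) :
    ∃ v : V, v ≠ 0 ∧ ∀ f ∈ s, ∃ c : K, f v = c • v := by
  let _ := LieRing.ofAssociativeRing (A := End K V)
  let L := LieSubalgebra.lieSpan K (End K V) s
  have : IsLieAbelian L := LieSubalgebra.isLieAbelian_lieSpan_iff.mpr fun f hf g hg => by
    rw [LieRing.of_associative_ring_bracket, sub_eq_zero]; exact hs f hf g hg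
  obtain ⟨χ, hχ⟩ := LieModule.exists_nontrivial_weightSpace_of_isNilpotent K L V
  obtain ⟨⟨v, hv⟩, hv0⟩ := exists_ne (0 : LieModule.weightSpace V χ)
  refine ⟨v, by simpa using hv0, fun f hf => ⟨χ ⟨f, LieSubalgebra.subset_lieSpan hf⟩, ?_⟩⟩
  exact (LieModule.mem_weightSpace _ _).mp hv ⟨f, LieSubalgebra.subset_lieSpan hf⟩

theorem LinearMap.apply_apply_mem_of_mem_span {R M N Q : Type*} [CommSemiring R]
    [AddCommMonoid M] [AddCommMonoid N] [AddCommMonoid Q] [Module R M] [Module R N] [Module R Q]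
    (f : M →ₗ[R] N →ₗ[R] Q) {s : Set M} {t : Set N} {p : Submodule R Q}
    (h : ∀ x ∈ s, ∀ y ∈ t, f x y ∈ p) {x : M} {y : N} (hx : x ∈ span R s) (hy : y ∈ span R t) :
    f x y ∈ p :=
  map₂_le.mp (by rw [map₂_span_span, span_le]; rintro _ ⟨x, hx, y, hy, rfl⟩; exact h x hx y hy)
    x hx y hy

theorem Submodule.map_sup_le_sup_map {K V : Type*} [Field K] [AddCommGroup V] [Module K V]
    {A : Submodule K V} {f : V →ₗ[K] V} (hf : ∀ a ∈ A, f a ∈ A) (W : Submodule K V) :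
    (A ⊔ W).map f ≤ A ⊔ W.map f := by
  rw [Submodule.map_sup]
  exact sup_le_sup_right (map_le_iff_le_comap.mpr hf) _

theorem Submodule.mem_of_apply_mem_of_sup_range_eq_top {K V : Type*} [Field K] [AddCommGroup V]
    [Module K V] [FiniteDimensional K V] {A : Submodule K V} {f : V →ₗ[K] V}
    (hf : ∀ a ∈ A, f a ∈ A) (htop : A ⊔ LinearMap.range f = ⊤) {x : V} (hx : f x ∈ A) : x ∈ A := by
  have hsurj : Function.Surjective (A.mapQ A f hf) := by
    intro q
    obtain ⟨y, rfl⟩ := Submodule.Quotient.mk_surjective A q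
    obtain ⟨a, ha, _, ⟨z, rfl⟩, rfl⟩ := mem_sup.mp (htop ▸ mem_top : y ∈ A ⊔ LinearMap.range f)
    refine ⟨Submodule.Quotient.mk z, ?_⟩
    rw [mapQ_apply, ← sub_eq_zero, ← Submodule.Quotient.mk_sub, Submodule.Quotient.mk_eq_zero]
    simpa using neg_mem ha
  rw [← Submodule.Quotient.mk_eq_zero] at hx ⊢
  exact LinearMap.injective_iff_surjective.mpr hsurj (by rwa [mapQ_apply, map_zero])

def powSpan (mul : P →ₗ[F] P →ₗ[F] P) (v : P) : Submodule F P :=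
  span F (Set.range fun k : ℕ => (mul v)^[k] v)

section

variable {mul br : P →ₗ[F] P →ₗ[F] P} {A : Submodule F P} {v : P}

def quotMulLeft (hA : IsSubalg mul br A) (a : A) : Module.End F (P ⧸ A) :=
  A.mapQ A (mul a) fun x hx => (hA a a.2 x hx).1

def quotBrRight (hA : IsSubalg mul br A) (a : A) : Module.End F (P ⧸ A) :=
  A.mapQ A (br.flip a) fun x hx => (hA x hx a a.2).2

@[simp]
lemma quotMulLeft_mk (hA : IsSubalg mul br A) (a : A) (x : P) :
    quotMulLeft hA a (Submodule.Quotient.mk x) = Submodule.Quotient.mk (mul a x) :=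
  rfl

@[simp]
lemma quotBrRight_mk (hA : IsSubalg mul br A) (a : A) (x : P) :
    quotBrRight hA a (Submodule.Quotient.mk x) = Submodule.Quotient.mk (br x a) :=
  rfl

lemma commute_quotMulLeft (hcomm : ∀ x y, mul x y = mul y x)
    (hassoc : ∀ x y z, mul (mul x y) z = mul x (mul y z)) (hA : IsSubalg mul br A) (a b : A) :
    Commute (quotMulLeft hA a) (quotMulLeft hA b) := by
  refine linearMap_qext _ (LinearMap.ext fun x => ?_)
  simp only [LinearMap.comp_apply, mkQ_apply, Module.End.mul_apply, quotMulLeft_mk]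
  rw [← hassoc, hcomm a b, hassoc]

lemma commute_quotBrRight (hskew : ∀ x, br x x = 0)
    (hjac : ∀ x y z, br (br x y) z + br (br y z) x + br (br z x) y = 0) (hA : IsSubalg mul br A)
    (hab : IsAbelian mul br A) (a b : A) : Commute (quotBrRight hA a) (quotBrRight hA b) := by
  refine linearMap_qext _ (LinearMap.ext fun x => ?_)
  simp only [LinearMap.comp_apply, mkQ_apply, Module.End.mul_apply, quotBrRight_mk]
  have h := hjac x b a
  rw [(hab b b.2 a a.2).2, map_zero, LinearMap.zero_apply, add_zero,
    ← LinearMap.IsAlt.neg hskew x a, map_neg, LinearMap.neg_apply, add_neg_eq_zero] at h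
  rw [h]

lemma commute_quotMulLeft_quotBrRight
    (hleib : ∀ x y z, br (mul x y) z = mul (br x z) y + mul x (br y z)) (hA : IsSubalg mul br A)
    (hab : IsAbelian mul br A) (a b : A) : Commute (quotMulLeft hA a) (quotBrRight hA b) := by
  refine linearMap_qext _ (LinearMap.ext fun x => ?_)
  simp only [LinearMap.comp_apply, mkQ_apply, Module.End.mul_apply, quotMulLeft_mk, quotBrRight_mk]
  rw [hleib, (hab a a.2 b b.2).2, map_zero, LinearMap.zero_apply, zero_add]

theorem exists_notMem_mul_mem_br_sub_smul_mem [IsAlgClosed F] [FiniteDimensional F P]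
    (hcomm : ∀ x y, mul x y = mul y x) (hassoc : ∀ x y z, mul (mul x y) z = mul x (mul y z))
    (hskew : ∀ x, br x x = 0) (hjac : ∀ x y z, br (br x y) z + br (br y z) x + br (br z x) y = 0)
    (hleib : ∀ x y z, br (mul x y) z = mul (br x z) y + mul x (br y z))
    (hA : IsSubalg mul br A) (hne : A ≠ ⊤) (hab : IsAbelian mul br A) :
    ∃ v ∉ A, (∀ a ∈ A, mul a v ∈ A) ∧ ∀ a ∈ A, ∃ c : F, br v a - c • v ∈ A := by
  have : Nontrivial (P ⧸ A) := Submodule.Quotient.nontrivial_iff.mpr hne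
  obtain ⟨w, hw0, hw⟩ := Module.End.exists_forall_apply_eq_smul_of_commute
    (Set.range (quotMulLeft hA) ∪ Set.range (quotBrRight hA)) <| by
      rintro _ (⟨a, rfl⟩ | ⟨a, rfl⟩) _ (⟨b, rfl⟩ | ⟨b, rfl⟩)
      · exact commute_quotMulLeft hcomm hassoc hA a b
      · exact commute_quotMulLeft_quotBrRight hleib hA hab a b
      · exact (commute_quotMulLeft_quotBrRight hleib hA hab b a).symm
      · exact commute_quotBrRight hskew hjac hA hab a b
  obtain ⟨v, rfl⟩ := Submodule.Quotient.mk_surjective A w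
  refine ⟨v, fun hv => hw0 ((Submodule.Quotient.mk_eq_zero A).mpr hv), fun a ha => ?_,
    fun a ha => ?_⟩
  · obtain ⟨c, hc⟩ := hw _ (Or.inl ⟨⟨a, ha⟩, rfl⟩)
    have hsq : (c * c) • Submodule.Quotient.mk v = (0 : P ⧸ A) := by
      rw [← smul_smul, ← hc, ← map_smul, ← hc]
      simp [← hassoc, (hab a ha a ha).1]
    have hc0 : c = 0 := mul_self_eq_zero.mp ((smul_eq_zero.mp hsq).resolve_right hw0)
    rw [← Submodule.Quotient.mk_eq_zero, ← quotMulLeft_mk hA ⟨a, ha⟩, hc, hc0, zero_smul]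
  · obtain ⟨c, hc⟩ := hw _ (Or.inr ⟨⟨a, ha⟩, rfl⟩)
    refine ⟨c, (Submodule.Quotient.mk_eq_zero A).mp ?_⟩
    rw [Submodule.Quotient.mk_sub, Submodule.Quotient.mk_smul, ← hc, quotBrRight_mk, sub_self]

lemma iterate_mem_powSpan (k : ℕ) : (mul v)^[k] v ∈ powSpan mul v :=
  subset_span ⟨k, rfl⟩

lemma mem_powSpan_self : v ∈ powSpan mul v :=
  iterate_mem_powSpan 0

lemma mul_iterate_iterate (hassoc : ∀ x y z, mul (mul x y) z = mul x (mul y z)) (j k : ℕ) :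
    mul ((mul v)^[j] v) ((mul v)^[k] v) = (mul v)^[j + k + 1] v := by
  induction j with
  | zero => rw [Function.iterate_zero_apply, zero_add, Function.iterate_succ_apply']
  | succ j ih =>
    rw [Function.iterate_succ_apply', hassoc, ih, add_right_comm j 1 k,
      Function.iterate_succ_apply' _ (j + k + 1)]

lemma mul_mem_powSpan (hassoc : ∀ x y z, mul (mul x y) z = mul x (mul y z)) {s t : P}
    (hs : s ∈ powSpan mul v) (ht : t ∈ powSpan mul v) : mul s t ∈ powSpan mul v := by
  refine mul.apply_apply_mem_of_mem_span ?_ hs ht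
  rintro _ ⟨j, rfl⟩ _ ⟨k, rfl⟩
  rw [mul_iterate_iterate hassoc]
  exact iterate_mem_powSpan _

lemma br_iterate_self_eq_zero (hskew : ∀ x, br x x = 0)
    (hleib : ∀ x y z, br (mul x y) z = mul (br x z) y + mul x (br y z)) (j : ℕ) :
    br ((mul v)^[j] v) v = 0 := by
  induction j with
  | zero => exact hskew v
  | succ j ih => rw [Function.iterate_succ_apply', hleib, hskew, ih, map_zero, map_zero,
      LinearMap.zero_apply, add_zero]

lemma br_iterate_iterate_eq_zero (hskew : ∀ x, br x x = 0)
    (hleib : ∀ x y z, br (mul x y) z = mul (br x z) y + mul x (br y z)) (j k : ℕ) :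
    br ((mul v)^[j] v) ((mul v)^[k] v) = 0 := by
  induction k generalizing j with
  | zero => exact br_iterate_self_eq_zero hskew hleib j
  | succ k ih =>
    rw [Function.iterate_succ_apply', ← LinearMap.IsAlt.neg hskew, hleib,
      ← LinearMap.IsAlt.neg hskew, br_iterate_self_eq_zero hskew hleib,
      ← LinearMap.IsAlt.neg hskew, ih]
    simp

lemma br_eq_zero_of_mem_powSpan (hskew : ∀ x, br x x = 0)
    (hleib : ∀ x y z, br (mul x y) z = mul (br x z) y + mul x (br y z)) {s t : P}
    (hs : s ∈ powSpan mul v) (ht : t ∈ powSpan mul v) : br s t = 0 := by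
  refine (mem_bot F).mp (br.apply_apply_mem_of_mem_span ?_ hs ht)
  rintro _ ⟨j, rfl⟩ _ ⟨k, rfl⟩
  rw [br_iterate_iterate_eq_zero hskew hleib]
  exact zero_mem _

lemma map_mul_powSpan_le (hassoc : ∀ x y z, mul (mul x y) z = mul x (mul y z)) :
    (powSpan mul v).map (mul v) ≤ powSpan mul v :=
  map_le_iff_le_comap.mpr fun _ hs => mul_mem_powSpan hassoc mem_powSpan_self hs

lemma mul_mem_of_mem_powSpan (hassoc : ∀ x y z, mul (mul x y) z = mul x (mul y z))
    (hv : ∀ a ∈ A, mul a v ∈ A) {a s : P} (ha : a ∈ A) (hs : s ∈ powSpan mul v) : mul a s ∈ A := by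
  have hpow : ∀ k, ∀ a ∈ A, mul a ((mul v)^[k] v) ∈ A := by
    intro k
    induction k with
    | zero => exact hv
    | succ k ih =>
      intro a ha
      rw [Function.iterate_succ_apply', ← hassoc]
      exact ih _ (hv a ha)
  refine mul.apply_apply_mem_of_mem_span (s := A) ?_ (subset_span ha) hs
  rintro a ha _ ⟨k, rfl⟩
  exact hpow k a ha

lemma br_mem_sup_powSpan (hcomm : ∀ x y, mul x y = mul y x)
    (hassoc : ∀ x y z, mul (mul x y) z = mul x (mul y z))
    (hleib : ∀ x y z, br (mul x y) z = mul (br x z) y + mul x (br y z))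
    (hv : ∀ a ∈ A, mul a v ∈ A) (hbr : ∀ a ∈ A, ∃ c : F, br v a - c • v ∈ A) {s a : P}
    (hs : s ∈ powSpan mul v) (ha : a ∈ A) : br s a ∈ A ⊔ powSpan mul v := by
  have hpow : ∀ k, ∀ a ∈ A, br ((mul v)^[k] v) a ∈ A ⊔ powSpan mul v := by
    intro k a ha
    obtain ⟨c, hc⟩ := hbr a ha
    induction k with
    | zero =>
      rw [Function.iterate_zero_apply, ← sub_add_cancel (br v a) (c • v)]
      exact add_mem (mem_sup_left hc) (mem_sup_right (smul_mem _ c mem_powSpan_self))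
    | succ k ih =>
      rw [Function.iterate_succ_apply', hleib, ← sub_add_cancel (br v a) (c • v), map_add,
        LinearMap.add_apply, map_smul, LinearMap.smul_apply]
      refine add_mem (add_mem (mem_sup_left (mul_mem_of_mem_powSpan hassoc hv hc
        (iterate_mem_powSpan k))) (mem_sup_right (smul_mem _ c (mul_mem_powSpan hassoc
          mem_powSpan_self (iterate_mem_powSpan k))))) ?_
      exact sup_le_sup_left (map_mul_powSpan_le hassoc) A
        (map_sup_le_sup_map (fun a ha => hcomm a v ▸ hv a ha) _ (mem_map_of_mem ih))
  refine br.apply_apply_mem_of_mem_span (t := A) ?_ hs (subset_span ha)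
  rintro _ ⟨k, rfl⟩ a ha
  exact hpow k a ha

lemma isSubalg_sup (hcomm : ∀ x y, mul x y = mul y x) (hskew : ∀ x, br x x = 0)
    (hA : IsSubalg mul br A) {W : Submodule F P}
    (hW : ∀ x ∈ W, ∀ y ∈ W, mul x y ∈ A ⊔ W ∧ br x y ∈ A ⊔ W)
    (hAW : ∀ x ∈ W, ∀ a ∈ A, mul a x ∈ A ⊔ W ∧ br x a ∈ A ⊔ W) : IsSubalg mul br (A ⊔ W) := by
  intro x hx y hy
  obtain ⟨a, ha, w, hw, rfl⟩ := mem_sup.mp hx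
  obtain ⟨b, hb, w', hw', rfl⟩ := mem_sup.mp hy
  simp only [map_add, LinearMap.add_apply]
  refine ⟨add_mem (add_mem (mem_sup_left (hA a ha b hb).1) ?_) (add_mem (hAW w' hw' a ha).1
    (hW w hw w' hw').1), add_mem (add_mem (mem_sup_left (hA a ha b hb).2) (hAW w hw b hb).2)
    (add_mem ?_ (hW w hw w' hw').2)⟩
  · exact hcomm b w ▸ (hAW w hw b hb).1
  · exact LinearMap.IsAlt.neg hskew w' a ▸ neg_mem (hAW w' hw' a ha).2

lemma isSubalg_sup_span_singleton (hcomm : ∀ x y, mul x y = mul y x) (hskew : ∀ x, br x x = 0)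
    (hA : IsSubalg mul br A) {u : P} (huu : mul u u ∈ A ⊔ span F {u})
    (hAu : ∀ a ∈ A, mul a u ∈ A ⊔ span F {u} ∧ br u a ∈ A ⊔ span F {u}) :
    IsSubalg mul br (A ⊔ span F {u}) := by
  refine isSubalg_sup hcomm hskew hA ?_ ?_
  · intro x hx y hy
    obtain ⟨c, rfl⟩ := mem_span_singleton.mp hx
    obtain ⟨d, rfl⟩ := mem_span_singleton.mp hy
    simp only [map_smul, LinearMap.smul_apply, hskew, smul_zero]
    exact ⟨smul_mem _ d (smul_mem _ c huu), zero_mem _⟩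
  · intro x hx a ha
    obtain ⟨c, rfl⟩ := mem_span_singleton.mp hx
    simp only [map_smul, LinearMap.smul_apply]
    exact ⟨smul_mem _ c (hAu a ha).1, smul_mem _ c (hAu a ha).2⟩

lemma isSubalg_sup_map_powSpan (hcomm : ∀ x y, mul x y = mul y x)
    (hassoc : ∀ x y z, mul (mul x y) z = mul x (mul y z)) (hskew : ∀ x, br x x = 0)
    (hleib : ∀ x y z, br (mul x y) z = mul (br x z) y + mul x (br y z))
    (hA : IsSubalg mul br A) (hv : ∀ a ∈ A, mul a v ∈ A)
    (hbr : ∀ a ∈ A, ∃ c : F, br v a - c • v ∈ A) :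
    IsSubalg mul br (A ⊔ (powSpan mul v).map (mul v)) := by
  have hvS : ∀ s ∈ powSpan mul v, mul v s ∈ powSpan mul v :=
    fun s hs => mul_mem_powSpan hassoc mem_powSpan_self hs
  refine isSubalg_sup hcomm hskew hA ?_ ?_
  · rintro _ ⟨s, hs, rfl⟩ _ ⟨t, ht, rfl⟩
    rw [hassoc, br_eq_zero_of_mem_powSpan hskew hleib (hvS s hs) (hvS t ht)]
    exact ⟨mem_sup_right (mem_map_of_mem (mul_mem_powSpan hassoc hs (hvS t ht))), zero_mem _⟩
  · rintro _ ⟨s, hs, rfl⟩ a ha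
    refine ⟨mem_sup_left (mul_mem_of_mem_powSpan hassoc hv ha (hvS s hs)), ?_⟩
    obtain ⟨c, hc⟩ := hbr a ha
    rw [hleib, ← sub_add_cancel (br v a) (c • v), map_add, LinearMap.add_apply, map_smul,
      LinearMap.smul_apply]
    exact add_mem (add_mem (mem_sup_left (mul_mem_of_mem_powSpan hassoc hv hc hs))
      (mem_sup_right (smul_mem _ c (mem_map_of_mem hs))))
      (map_sup_le_sup_map (fun a ha => hcomm a v ▸ hv a ha) _
        (mem_map_of_mem (br_mem_sup_powSpan hcomm hassoc hleib hv hbr hs ha)))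

lemma exists_notMem_mul_self_sub_mem [FiniteDimensional F P] (hcomm : ∀ x y, mul x y = mul y x)
    (hassoc : ∀ x y z, mul (mul x y) z = mul x (mul y z))
    (hleib : ∀ x y z, br (mul x y) z = mul (br x z) y + mul x (br y z)) (hab : IsAbelian mul br A)
    (hvA : v ∉ A) (hv : ∀ a ∈ A, mul a v ∈ A) (hbr : ∀ a ∈ A, ∃ c : F, br v a - c • v ∈ A)
    (htop : A ⊔ (powSpan mul v).map (mul v) = ⊤) :
    ∃ u ∉ A, mul u u - u ∈ A ∧ ∀ a ∈ A, mul a u ∈ A ∧ br u a ∈ A := by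
  have hv' : ∀ a ∈ A, mul v a ∈ A := fun a ha => hcomm a v ▸ hv a ha
  have hinj : ∀ x, mul v x ∈ A → x ∈ A := fun x =>
    mem_of_apply_mem_of_sup_range_eq_top hv'
      (top_unique (htop ▸ sup_le_sup_left LinearMap.map_le_range A))
  obtain ⟨a₀, ha₀, _, ⟨u, hu, rfl⟩, hvu⟩ := mem_sup.mp (htop ▸ mem_top : v ∈ A ⊔ _)
  have hAu : ∀ a ∈ A, mul a u ∈ A := fun a ha => mul_mem_of_mem_powSpan hassoc hv ha hu
  replace hvu : mul v u = v - a₀ := eq_sub_of_add_eq' hvu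
  refine ⟨u, fun huA => hvA ?_, hinj _ ?_, fun a ha => ⟨hAu a ha, hinj _ ?_⟩⟩
  · simpa [hvu] using add_mem (hv' u huA) ha₀
  · have : mul v (mul u u - u) = -mul a₀ u := by
      rw [map_sub, ← hassoc, hvu, map_sub, LinearMap.sub_apply, hvu]
      abel
    rw [this]
    exact neg_mem (hAu a₀ ha₀)
  · obtain ⟨c, hc⟩ := hbr a ha
    have : mul v (br u a) = br v a - c • v - mul (br v a - c • v) u + c • a₀ := by
      rw [eq_sub_of_add_eq' (hleib v u a).symm, hvu, map_sub, LinearMap.sub_apply,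
        (hab a₀ ha₀ a ha).2, sub_zero, map_sub, map_smul, LinearMap.sub_apply,
        LinearMap.smul_apply, hvu]
      module
    rw [this]
    exact add_mem (sub_mem hc (hAu _ hc)) (smul_mem _ c ha₀)

theorem exists_notMem_isSubalg_sup_span_singleton [IsAlgClosed F] [FiniteDimensional F P]
    (hcomm : ∀ x y, mul x y = mul y x) (hassoc : ∀ x y z, mul (mul x y) z = mul x (mul y z))
    (hskew : ∀ x, br x x = 0) (hjac : ∀ x y z, br (br x y) z + br (br y z) x + br (br z x) y = 0)
    (hleib : ∀ x y z, br (mul x y) z = mul (br x z) y + mul x (br y z))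
    (hA : IsSubalg mul br A) (hne : A ≠ ⊤)
    (hmax : ∀ B : Submodule F P, IsSubalg mul br B → A < B → B = ⊤) (hab : IsAbelian mul br A) :
    ∃ u ∉ A, IsSubalg mul br (A ⊔ span F {u}) := by
  obtain ⟨v, hvA, hv, hbr⟩ :=
    exists_notMem_mul_mem_br_sub_smul_mem hcomm hassoc hskew hjac hleib hA hne hab
  by_cases hS : (powSpan mul v).map (mul v) ≤ A
  · refine ⟨v, hvA, isSubalg_sup_span_singleton hcomm hskew hA
      (mem_sup_left (hS (mem_map_of_mem mem_powSpan_self)))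
      fun a ha => ⟨mem_sup_left (hv a ha), ?_⟩⟩
    obtain ⟨c, hc⟩ := hbr a ha
    rw [← sub_add_cancel (br v a) (c • v)]
    exact add_mem (mem_sup_left hc) (mem_sup_right (smul_mem _ c (mem_span_singleton_self v)))
  · obtain ⟨u, huA, huu, hAu⟩ := exists_notMem_mul_self_sub_mem hcomm hassoc hleib hab hvA hv hbr
      (hmax _ (isSubalg_sup_map_powSpan hcomm hassoc hskew hleib hA hv hbr) (left_lt_sup.mpr hS))
    refine ⟨u, huA, isSubalg_sup_span_singleton hcomm hskew hA ?_ fun a ha =>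
      ⟨mem_sup_left (hAu a ha).1, mem_sup_left (hAu a ha).2⟩⟩
    rw [← sub_add_cancel (mul u u) u]
    exact add_mem (mem_sup_left huu) (mem_sup_right (mem_span_singleton_self u))

end

/-- Over an algebraically closed field, a maximal subalgebra of a
finite-dimensional Poisson algebra which is abelian has codimension one. -/
theorem maximal_abelian_subalgebra_codim_one [IsAlgClosed F] [FiniteDimensional F P]
    (mul br : P →ₗ[F] P →ₗ[F] P)
    (hcomm : ∀ x y, mul x y = mul y x)
    (hassoc : ∀ x y z, mul (mul x y) z = mul x (mul y z))
    (hskew : ∀ x, br x x = 0)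
    (hjac : ∀ x y z, br (br x y) z + br (br y z) x + br (br z x) y = 0)
    (hleib : ∀ x y z, br (mul x y) z = mul (br x z) y + mul x (br y z))
    (A : Submodule F P) (hA : IsSubalg mul br A) (hne : A ≠ ⊤)
    (hmax : ∀ B : Submodule F P, IsSubalg mul br B → A < B → B = ⊤)
    (hab : IsAbelian mul br A) :
    Module.finrank F A + 1 = Module.finrank F P := by
  obtain ⟨u, hu, hsub⟩ :=
    exists_notMem_isSubalg_sup_span_singleton hcomm hassoc hskew hjac hleib hA hne hmax hab
  rw [← finrank_sup_span_singleton hu,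
    hmax _ hsub (left_lt_sup.mpr ((span_singleton_le_iff_mem u A).not.mpr hu)), finrank_top]
end

section
/- Let A be a finite-dimensional associative commutative algebra. Then every abelian subalgebra of maximal dimension is an abelian ideal; in particular α(A) = β(A), where α is the maximal dimension of a subalgebra S with SS=0 and β is the maximal dimension of an ideal I with II=0. -/
/-!
Let `S` be an abelian subalgebra of maximal dimension, `a ∈ S` and `y ∈ A`. By associativity
`S (a y) = (S a) y = 0`, and by commutativity `(a y)(a y) = (a a)(y y) = 0`. Hence `S + F (a y)`
is again abelian, and maximality of `dim S` forces `a y ∈ S`. So `S` is an ideal, and it is then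
an abelian ideal of dimension `α(A)`.
-/

section Abelian

variable {R M : Type*} [CommSemiring R] [AddCommMonoid M] [Module R M]

def Submodule.IsAbelianFor (mul : M →ₗ[R] M →ₗ[R] M) (S : Submodule R M) : Prop :=
  ∀ x ∈ S, ∀ y ∈ S, mul x y = 0

theorem Submodule.IsAbelianFor.sup_span_singleton {mul : M →ₗ[R] M →ₗ[R] M}
    {S : Submodule R M} (hS : S.IsAbelianFor mul) {b : M}
    (hSb : ∀ s ∈ S, mul s b = 0) (hbS : ∀ s ∈ S, mul b s = 0) (hbb : mul b b = 0) :
    (S ⊔ Submodule.span R {b}).IsAbelianFor mul := by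
  intro x hx z hz
  obtain ⟨s, hs, _, ht, rfl⟩ := Submodule.mem_sup.mp hx
  obtain ⟨s', hs', _, ht', rfl⟩ := Submodule.mem_sup.mp hz
  obtain ⟨c, rfl⟩ := Submodule.mem_span_singleton.mp ht
  obtain ⟨c', rfl⟩ := Submodule.mem_span_singleton.mp ht'
  simp [hS s hs s' hs', hSb s hs, hbS s' hs', hbb]

end Abelian

section CommAssoc

variable {R M : Type*} [CommSemiring R] [AddCommMonoid M] [Module R M]
  {mul : M →ₗ[R] M →ₗ[R] M}

theorem bilin_mul_mul_mul_comm (hcomm : ∀ x y, mul x y = mul y x)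
    (hassoc : ∀ x y z, mul (mul x y) z = mul x (mul y z)) (a b c d : M) :
    mul (mul a b) (mul c d) = mul (mul a c) (mul b d) := by
  calc mul (mul a b) (mul c d) = mul a (mul b (mul c d)) := hassoc _ _ _
    _ = mul a (mul c (mul b d)) := by rw [← hassoc b, hcomm b c, hassoc]
    _ = mul (mul a c) (mul b d) := (hassoc _ _ _).symm

theorem Submodule.IsAbelianFor.isAbelianFor_sup_span_mul (hcomm : ∀ x y, mul x y = mul y x)
    (hassoc : ∀ x y z, mul (mul x y) z = mul x (mul y z)) {S : Submodule R M}
    (hS : S.IsAbelianFor mul) {a : M} (ha : a ∈ S) (y : M) :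
    (S ⊔ Submodule.span R {mul a y}).IsAbelianFor mul := by
  have hSb : ∀ s ∈ S, mul s (mul a y) = 0 := fun s hs => by
    rw [← hassoc, hS s hs a ha, map_zero, LinearMap.zero_apply]
  refine hS.sup_span_singleton hSb (fun s hs => hcomm s _ ▸ hSb s hs) ?_
  rw [bilin_mul_mul_mul_comm hcomm hassoc, hS a ha a ha, map_zero, LinearMap.zero_apply]

end CommAssoc

theorem Submodule.IsAbelianFor.mem_of_sup_span_singleton {K V : Type*} [Field K]
    [AddCommGroup V] [Module K V] [FiniteDimensional K V] {mul : V →ₗ[K] V →ₗ[K] V}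
    {S : Submodule K V}
    (hmax : ∀ T : Submodule K V, T.IsAbelianFor mul → Module.finrank K T ≤ Module.finrank K S)
    {b : V} (hb : (S ⊔ Submodule.span K {b}).IsAbelianFor mul) : b ∈ S := by
  rw [Submodule.eq_of_le_of_finrank_le le_sup_left (hmax _ hb)]
  exact Submodule.mem_sup_right (Submodule.mem_span_singleton_self b)

variable {F : Type*} [Field F] {A : Type*} [AddCommGroup A] [Module F A]

/-- In a finite-dimensional associative commutative algebra, every abelian
subalgebra of maximal dimension is an abelian ideal; in particular `α = β`. -/
theorem assocComm_abelian_max_isIdeal [FiniteDimensional F A]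
    (mul : A →ₗ[F] A →ₗ[F] A)
    (hcomm : ∀ x y, mul x y = mul y x)
    (hassoc : ∀ x y z, mul (mul x y) z = mul x (mul y z))
    (S : Submodule F A)
    (habS : ∀ x ∈ S, ∀ y ∈ S, mul x y = 0)
    (hmax : ∀ T : Submodule F A, (∀ x ∈ T, ∀ y ∈ T, mul x y = 0) →
      Module.finrank F T ≤ Module.finrank F S) :
    (∀ a ∈ S, ∀ y : A, mul a y ∈ S ∧ mul y a ∈ S) ∧
    ∃ I : Submodule F A, (∀ a ∈ I, ∀ y : A, mul a y ∈ I ∧ mul y a ∈ I) ∧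
      (∀ x ∈ I, ∀ y ∈ I, mul x y = 0) ∧
      Module.finrank F I = Module.finrank F S := by
  have hS : S.IsAbelianFor mul := habS
  have hideal : ∀ a ∈ S, ∀ y : A, mul a y ∈ S ∧ mul y a ∈ S := fun a ha y =>
    have hay : mul a y ∈ S :=
      Submodule.IsAbelianFor.mem_of_sup_span_singleton hmax
        (hS.isAbelianFor_sup_span_mul hcomm hassoc ha y)
    ⟨hay, hcomm y a ▸ hay⟩
  exact ⟨hideal, S, hideal, habS, rfl⟩
end

section
/- Let P be a Poisson algebra of dimension n over an arbitrary field. If P has an abelian subalgebra of dimension n−1, then P has an abelian ideal of dimension n−1. -/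
/-!
Write `A = ker φ`. Since `A` is abelian, for every bilinear product `B` and every `a ∈ A` the map
`v ↦ B v a` vanishes on `ker φ`, hence is proportional to `φ`. Applied to `(x a) a = x (a a) = 0`
this gives `φ (x a) ^ 2 = 0`, so `A` is always an associative ideal, and if `[P, A] ⊆ A` it is the
required ideal. Otherwise some `e` and `a₁ ∈ A` satisfy `φ e = 1` and `[e, a₁] = e`; the Jacobi
identity then forces `[x, y] = (φ x θ y - φ y θ x) e` with `θ = φ ∘ [e, ·]`, the Leibniz rule kills
the associative product, and `ker θ` is an abelian ideal of codimension one.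
-/

variable {F : Type*} [Field F] {P : Type*} [AddCommGroup P] [Module F P]

open LinearMap

theorem exists_ker_eq_of_finrank_add_one [FiniteDimensional F P] {A : Submodule F P}
    (hA : Module.finrank F A + 1 = Module.finrank F P) :
    ∃ φ : Module.Dual F P, ker φ = A := by
  obtain ⟨x, hx⟩ : ∃ x, x ∉ A := by
    by_contra! h
    rw [Submodule.eq_top_iff'.mpr h, finrank_top] at hA
    omega
  obtain ⟨φ, hφx, hφA⟩ := A.exists_dual_map_eq_bot_of_notMem hx inferInstance
  have hφ : φ ≠ 0 := fun h => hφx (by simp [h])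
  refine ⟨φ, (Submodule.eq_of_le_of_finrank_eq (le_ker_iff_map.mpr hφA) ?_).symm⟩
  have := Module.Dual.finrank_ker_add_one_of_ne_zero hφ
  omega

section Hyperplane

variable {V : Type*} [AddCommGroup V] [Module F V] {φ : P →ₗ[F] F}

theorem smul_apply_comm_of_ker_le {f : P →ₗ[F] V} (hf : ker φ ≤ ker f) (u v : P) :
    φ u • f v = φ v • f u := by
  have hmem : φ u • v - φ v • u ∈ ker φ := by
    simp only [mem_ker, map_sub, map_smul, smul_eq_mul, mul_comm, sub_self]
  simpa [sub_eq_zero] using hf hmem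

theorem apply_eq_zero_of_ker_le {f : P →ₗ[F] V} (hf : ker φ ≤ ker f) {e : P} (he : φ e ≠ 0)
    (hfe : f e = 0) (v : P) : f v = 0 := by
  have := smul_apply_comm_of_ker_le hf e v
  rwa [hfe, smul_zero, smul_eq_zero, or_iff_right he] at this

theorem smul_apply_left_comm {B : P →ₗ[F] P →ₗ[F] V} {a : P} (hB : ∀ b ∈ ker φ, B b a = 0)
    (u v : P) : φ u • B v a = φ v • B u a :=
  smul_apply_comm_of_ker_le (f := B.flip a) hB u v

theorem mul_mem_ker_of_mul_eq_zero {mul : P →ₗ[F] P →ₗ[F] P}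
    (hassoc : ∀ x y z, mul (mul x y) z = mul x (mul y z))
    (hA : ∀ a ∈ ker φ, ∀ b ∈ ker φ, mul a b = 0) (x : P) {a : P} (ha : a ∈ ker φ) :
    mul x a ∈ ker φ := by
  have key := smul_apply_left_comm (fun b hb => hA b hb a ha) x (mul x a)
  rw [hassoc, hA a ha a ha, map_zero, smul_zero] at key
  have := congrArg φ key.symm
  simpa only [mem_ker, map_smul, map_zero, smul_eq_mul, mul_self_eq_zero] using this

theorem exists_apply_eq_self {B : P →ₗ[F] P →ₗ[F] P} {a : P} (ha : a ∈ ker φ)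
    (hB : ∀ b ∈ ker φ, B b a = 0) {x : P} (hxa : φ (B x a) ≠ 0) :
    ∃ e a₁, a₁ ∈ ker φ ∧ φ e = 1 ∧ B e a₁ = e := by
  set c := φ (B x a)
  have key : φ x • B (B x a) a = c • B x a := smul_apply_left_comm hB x (B x a)
  refine ⟨c⁻¹ • B x a, (φ x * c⁻¹) • a, Submodule.smul_mem _ _ ha, ?_, ?_⟩
  · rw [map_smul, smul_eq_mul, inv_mul_cancel₀ hxa]
  · calc B (c⁻¹ • B x a) ((φ x * c⁻¹) • a) = (c⁻¹ * c⁻¹) • φ x • B (B x a) a := by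
          simp only [map_smul, LinearMap.smul_apply, smul_smul]
          congr 1
          ring
      _ = c⁻¹ • B x a := by rw [key, smul_smul, mul_assoc, inv_mul_cancel₀ hxa, mul_one]

end Hyperplane

section Poisson

variable {φ : P →ₗ[F] F} {mul br : P →ₗ[F] P →ₗ[F] P} {e a₁ : P}

theorem isIdeal_ker_of_bracket_mem (hcomm : ∀ x y, mul x y = mul y x)
    (hassoc : ∀ x y z, mul (mul x y) z = mul x (mul y z)) (hskew : br.IsAlt)
    (hab : IsAbelian mul br (ker φ)) (hbr : ∀ x, ∀ a ∈ ker φ, br x a ∈ ker φ) :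
    IsIdeal mul br (ker φ) := by
  intro a ha y
  have hmul : mul y a ∈ ker φ :=
    mul_mem_ker_of_mul_eq_zero hassoc (fun a ha b hb => (hab a ha b hb).1) y ha
  refine ⟨hcomm a y ▸ hmul, hmul, ?_, hbr y a ha⟩
  rw [← hskew.neg]
  exact neg_mem (hbr y a ha)

theorem mul_eq_zero_of_bracket_eq_self (hcomm : ∀ x y, mul x y = mul y x)
    (hassoc : ∀ x y z, mul (mul x y) z = mul x (mul y z))
    (hleib : ∀ x y z, br (mul x y) z = mul (br x z) y + mul x (br y z)) (hskew : br.IsAlt)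
    (hab : IsAbelian mul br (ker φ)) (he : φ e ≠ 0) (ha₁ : a₁ ∈ ker φ) (hea₁ : br e a₁ = e)
    (x y : P) : mul x y = 0 := by
  have hAA : ∀ a ∈ ker φ, ∀ b ∈ ker φ, mul a b = 0 := fun a ha b hb => (hab a ha b hb).1
  have heA : ∀ a ∈ ker φ, mul e a = 0 := by
    intro a ha
    have h := hleib e a a₁
    rw [(hab _ (mul_mem_ker_of_mul_eq_zero hassoc hAA e ha) a₁ ha₁).2, (hab a ha a₁ ha₁).2,
      map_zero, add_zero, hea₁] at h
    exact h.symm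
  have hPA : ∀ a ∈ ker φ, ∀ x, mul x a = 0 := fun a ha =>
    apply_eq_zero_of_ker_le (f := mul.flip a) (fun b hb => hAA b hb a ha) he (heA a ha)
  have hee : mul e e = 0 := by
    have h := hleib e a₁ e
    rw [heA a₁ ha₁, hskew.self_eq_zero e, ← hskew.neg e a₁, hea₁] at h
    simpa using h.symm
  have heP : ∀ y, mul e y = 0 :=
    apply_eq_zero_of_ker_le (f := mul e) (fun b hb => hPA b hb e) he hee
  exact apply_eq_zero_of_ker_le (f := mul.flip y) (fun a ha => (hcomm a y).trans (hPA a ha y))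
    he (heP y) x

variable (hskew : br.IsAlt) (hA : ∀ a ∈ ker φ, ∀ b ∈ ker φ, br a b = 0)
include hskew hA

theorem bracket_eq_smul_of_bracket_eq_self
    (hjac : ∀ x y z, br (br x y) z + br (br y z) x + br (br z x) y = 0)
    (he : φ e = 1) (ha₁ : a₁ ∈ ker φ) (hea₁ : br e a₁ = e) (y : P) :
    br e y = φ (br e y) • e := by
  have hker : ∀ b ∈ ker φ, br e b = φ (br e b) • e := by
    intro b hb
    have h : br (br b e) a₁ = φ (br b e) • e := by
      have := smul_apply_left_comm (fun c hc => hA c hc a₁ ha₁) e (br b e)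
      rwa [he, one_smul, hea₁] at this
    have hj := hjac e a₁ b
    rwa [hea₁, hA a₁ ha₁ b hb, map_zero, LinearMap.zero_apply, add_zero, h, ← hskew.neg e b,
      map_neg, neg_smul, ← sub_eq_add_neg, sub_eq_zero] at hj
  have hf := apply_eq_zero_of_ker_le (f := br e - (φ ∘ₗ br e).smulRight e)
    (fun b hb => sub_eq_zero.mpr (hker b hb)) (he ▸ one_ne_zero)
    (by simp [hskew.self_eq_zero e]) y
  exact sub_eq_zero.mp hf

theorem bracket_eq (he : φ e = 1) (hbr : ∀ y, br e y = φ (br e y) • e) (x y : P) :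
    br x y = (φ x * φ (br e y) - φ y * φ (br e x)) • e := by
  have hf := apply_eq_zero_of_ker_le
    (f := br.flip y - (φ (br e y) • φ - φ y • (φ ∘ₗ br e)).smulRight e) (e := e) ?_
    (he ▸ one_ne_zero) ?_ x
  · simpa [sub_eq_zero, mul_comm] using hf
  · intro a ha
    have := smul_apply_left_comm (fun c hc => hA c hc a ha) e y
    rw [he, one_smul, hbr a] at this
    simp only [mem_ker] at ha
    simp [ha, ← hskew.neg y a, this, smul_smul]
  · simp [he, hskew.self_eq_zero e, ← hbr y]

end Poisson

/-- If a Poisson algebra of dimension `n` has an abelian subalgebra of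
dimension `n - 1`, then it has an abelian ideal of dimension `n - 1`. -/
theorem abelian_codim_one_gives_abelian_ideal [FiniteDimensional F P]
    (mul br : P →ₗ[F] P →ₗ[F] P)
    (hcomm : ∀ x y, mul x y = mul y x)
    (hassoc : ∀ x y z, mul (mul x y) z = mul x (mul y z))
    (hskew : ∀ x, br x x = 0)
    (hjac : ∀ x y z, br (br x y) z + br (br y z) x + br (br z x) y = 0)
    (hleib : ∀ x y z, br (mul x y) z = mul (br x z) y + mul x (br y z))
    (A : Submodule F P) (hab : IsAbelian mul br A)
    (hdim : Module.finrank F A + 1 = Module.finrank F P) :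
    ∃ I : Submodule F P, IsAbelian mul br I ∧ IsIdeal mul br I ∧
      Module.finrank F I + 1 = Module.finrank F P := by
  obtain ⟨φ, rfl⟩ := exists_ker_eq_of_finrank_add_one hdim
  have hbrA : ∀ a ∈ ker φ, ∀ b ∈ ker φ, br a b = 0 := fun a ha b hb => (hab a ha b hb).2
  by_cases hstable : ∀ x, ∀ a ∈ ker φ, br x a ∈ ker φ
  · exact ⟨_, hab, isIdeal_ker_of_bracket_mem hcomm hassoc hskew hab hstable, hdim⟩
  push Not at hstable
  obtain ⟨x, a, ha, hxa⟩ := hstable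
  obtain ⟨e, a₁, ha₁, he, hea₁⟩ := exists_apply_eq_self ha (fun b hb => hbrA b hb a ha) hxa
  have hmul := mul_eq_zero_of_bracket_eq_self hcomm hassoc hleib hskew hab (he ▸ one_ne_zero)
    ha₁ hea₁
  have hbr := bracket_eq hskew hbrA he
    (bracket_eq_smul_of_bracket_eq_self hskew hbrA hjac he ha₁ hea₁)
  have hbr_mem : ∀ x y, br x y ∈ ker (φ ∘ₗ br e) := fun x y => by
    simp [hbr x y, hskew e]
  refine ⟨ker (φ ∘ₗ br e), fun x hx y hy => ⟨hmul x y, ?_⟩,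
    fun x _ y => ⟨hmul x y ▸ zero_mem _, hmul y x ▸ zero_mem _, hbr_mem x y, hbr_mem y x⟩,
    Module.Dual.finrank_ker_add_one_of_ne_zero fun h => ?_⟩
  · have hx' : φ (br e x) = 0 := hx
    have hy' : φ (br e y) = 0 := hy
    rw [hbr x y, hx', hy', mul_zero, mul_zero, sub_zero, zero_smul]
  · simpa [hea₁, he] using congrArg (· a₁) h
end

section
/- Let P be a non-trivial Poisson algebra of dimension n over an arbitrary field (i.e., both the commutative product and the bracket are nonzero). Then every abelian subalgebra of codimension one in P is an abelian ideal of P. -/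
variable {F : Type*} [Field F] {P : Type*} [AddCommGroup P] [Module F P]

/-!
Choose `e ∉ A`, so that `P = A ⊕ F e`. For `x ∈ A` write `x e = c e + a` with `a ∈ A`;
associativity gives `0 = (x x) e = x (x e) = c² e + c a`, hence `c = 0` and `A P ⊆ A`.
If `{a, e} = c e + g` with `c ≠ 0` for some `a ∈ A`, the Leibniz rule for `{b e, a}` (`b ∈ A`)
and for `{a e, e}` gives `c (b e) = 0` and `c (e e) = 0`, so the product vanishes on `A ⊕ F e`,
i.e. it is zero. Hence also `{A, P} ⊆ A`.
-/

open Module Submodule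

theorem Submodule.isCoatom_of_finrank_add_one {A : Submodule F P}
    (hdim : finrank F A + 1 = finrank F P) : IsCoatom A := by
  have : FiniteDimensional F P := Module.finite_of_finrank_pos (by omega)
  refine ⟨fun hA => ?_, fun B hAB => eq_top_of_finrank_eq ?_⟩
  · rw [hA, finrank_top] at hdim
    omega
  · have := finrank_lt_finrank_of_lt hAB
    exact le_antisymm B.finrank_le (by omega)

theorem Submodule.exists_eq_smul_add_of_sup_eq_top {A : Submodule F P} {e : P}
    (hsup : A ⊔ F ∙ e = ⊤) (v : P) : ∃ c : F, ∃ a ∈ A, v = c • e + a := by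
  obtain ⟨a, ha, b, hb, rfl⟩ := mem_sup.mp (hsup ▸ mem_top : v ∈ A ⊔ F ∙ e)
  obtain ⟨c, rfl⟩ := mem_span_singleton.mp hb
  exact ⟨c, a, ha, add_comm _ _⟩

theorem Submodule.eq_zero_of_smul_add_mem {A : Submodule F P} {e : P} (he : e ∉ A) {c : F}
    {a : P} (ha : a ∈ A) (h : c • e + a ∈ A) : c = 0 := by
  by_contra hc
  exact he ((A.smul_mem_iff hc).mp ((A.add_mem_iff_left ha).mp h))

theorem Submodule.apply_mem_of_sup_eq_top {M : Type*} [AddCommGroup M] [Module F M]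
    {A : Submodule F P} {e : P} (hsup : A ⊔ F ∙ e = ⊤) {B : Submodule F M} (g : P →ₗ[F] M)
    (hA : ∀ a ∈ A, g a ∈ B) (he : g e ∈ B) (v : P) : g v ∈ B := by
  have : A ⊔ F ∙ e ≤ B.comap g := sup_le hA ((span_singleton_le_iff_mem _ _).mpr he)
  exact this (hsup ▸ mem_top)

theorem LinearMap.eq_zero_of_sup_eq_top {M : Type*} [AddCommGroup M] [Module F M]
    {A : Submodule F P} {e : P} (hsup : A ⊔ F ∙ e = ⊤) (g : P →ₗ[F] M)
    (hA : ∀ a ∈ A, g a = 0) (he : g e = 0) : g = 0 :=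
  LinearMap.ext fun v => (mem_bot F).mp <|
    apply_mem_of_sup_eq_top hsup g (fun a ha => (mem_bot F).mpr (hA a ha))
      ((mem_bot F).mpr he) v

section Poisson

variable {mul br : P →ₗ[F] P →ₗ[F] P} {A : Submodule F P} {e : P}

theorem mul_mem_of_sup_eq_top (hassoc : ∀ x y z, mul (mul x y) z = mul x (mul y z))
    (hA : ∀ x ∈ A, ∀ y ∈ A, mul x y = 0) (hsup : A ⊔ F ∙ e = ⊤) (he : e ∉ A)
    {x : P} (hx : x ∈ A) : mul x e ∈ A := by
  obtain ⟨c, a, ha, hxe⟩ := exists_eq_smul_add_of_sup_eq_top hsup (mul x e)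
  have hsq : (c * c) • e + c • a = 0 :=
    calc (c * c) • e + c • a = c • mul x e := by rw [hxe, smul_add, smul_smul]
      _ = mul x (mul x e) := by rw [hxe, map_add, map_smul, hA x hx a ha, add_zero, hxe]
      _ = 0 := by rw [← hassoc, hA x hx x hx, map_zero, LinearMap.zero_apply]
  have hc : c = 0 :=
    mul_self_eq_zero.mp (eq_zero_of_smul_add_mem he (A.smul_mem c ha) (hsq ▸ A.zero_mem))
  rw [hxe, hc, zero_smul, zero_add]
  exact ha

theorem mul_eq_zero_of_bracket_not_mem (hcomm : ∀ x y, mul x y = mul y x)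
    (hskew : ∀ x, br x x = 0)
    (hleib : ∀ x y z, br (mul x y) z = mul (br x z) y + mul x (br y z))
    (hab : IsAbelian mul br A) (hsup : A ⊔ F ∙ e = ⊤) (hmulA : ∀ x ∈ A, mul x e ∈ A)
    {a : P} (ha : a ∈ A) (hae : br a e ∉ A) : mul = 0 := by
  obtain ⟨c, g, hg, hbr⟩ := exists_eq_smul_add_of_sup_eq_top hsup (br a e)
  have hc : c ≠ 0 := by
    rintro rfl
    exact hae (by rwa [hbr, zero_smul, zero_add])
  have hAe : ∀ b ∈ A, mul b e = 0 := by
    intro b hb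
    have h := hleib b e a
    rw [(hab _ (hmulA b hb) a ha).2, (hab b hb a ha).2, map_zero, LinearMap.zero_apply, zero_add,
      ← LinearMap.IsAlt.neg hskew, hbr, map_neg, map_add, map_smul, (hab b hb g hg).1,
      add_zero, eq_comm, neg_eq_zero] at h
    exact (smul_eq_zero.mp h).resolve_left hc
  have hee : mul e e = 0 := by
    have h := hleib a e e
    rw [hAe a ha, map_zero, LinearMap.zero_apply, hskew, map_zero, add_zero, hbr, map_add,
      LinearMap.add_apply, map_smul, LinearMap.smul_apply, hAe g hg, add_zero, eq_comm] at h
    exact (smul_eq_zero.mp h).resolve_left hc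
  refine LinearMap.eq_zero_of_sup_eq_top hsup mul (fun b hb => ?_) ?_
  · exact LinearMap.eq_zero_of_sup_eq_top hsup _ (fun b' hb' => (hab b hb b' hb').1) (hAe b hb)
  · exact LinearMap.eq_zero_of_sup_eq_top hsup _ (fun b hb => hcomm e b ▸ hAe b hb) hee

end Poisson

theorem abelian_codim_one_isIdeal_general
    (mul br : P →ₗ[F] P →ₗ[F] P)
    (hmul_ne : mul ≠ 0)
    (hcomm : ∀ x y, mul x y = mul y x)
    (hassoc : ∀ x y z, mul (mul x y) z = mul x (mul y z))
    (hskew : ∀ x, br x x = 0)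
    (hleib : ∀ x y z, br (mul x y) z = mul (br x z) y + mul x (br y z))
    (A : Submodule F P) (hab : IsAbelian mul br A)
    (hdim : Module.finrank F A + 1 = Module.finrank F P) :
    IsIdeal mul br A := by
  have hcoatom := isCoatom_of_finrank_add_one hdim
  obtain ⟨e, -, he⟩ := SetLike.exists_of_lt (lt_top_iff_ne_top.mpr hcoatom.1)
  have hsup : A ⊔ F ∙ e = ⊤ :=
    (isCompl_span_singleton_of_isCoatom_of_notMem hcoatom he).sup_eq_top
  have hmulA : ∀ x ∈ A, mul x e ∈ A := fun x hx =>
    mul_mem_of_sup_eq_top hassoc (fun x hx y hy => (hab x hx y hy).1) hsup he hx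
  have hbrA : ∀ x ∈ A, br x e ∈ A := fun x hx => by_contra fun hxe =>
    hmul_ne (mul_eq_zero_of_bracket_not_mem hcomm hskew hleib hab hsup hmulA hx hxe)
  intro x hx y
  have hmul : mul x y ∈ A :=
    apply_mem_of_sup_eq_top hsup (mul x) (fun a ha => (hab x hx a ha).1 ▸ A.zero_mem)
      (hmulA x hx) y
  have hbr : br x y ∈ A :=
    apply_mem_of_sup_eq_top hsup (br x) (fun a ha => (hab x hx a ha).2 ▸ A.zero_mem)
      (hbrA x hx) y
  exact ⟨hmul, hcomm x y ▸ hmul, hbr, LinearMap.IsAlt.neg hskew x y ▸ A.neg_mem hbr⟩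

/-- In a non-trivial Poisson algebra, every abelian subalgebra of codimension
one is an abelian ideal. -/
theorem abelian_codim_one_isIdeal [FiniteDimensional F P]
    (mul br : P →ₗ[F] P →ₗ[F] P)
    (hmul_ne : mul ≠ 0) (hbr_ne : br ≠ 0)
    (hcomm : ∀ x y, mul x y = mul y x)
    (hassoc : ∀ x y z, mul (mul x y) z = mul x (mul y z))
    (hskew : ∀ x, br x x = 0)
    (hjac : ∀ x y z, br (br x y) z + br (br y z) x + br (br z x) y = 0)
    (hleib : ∀ x y z, br (mul x y) z = mul (br x z) y + mul x (br y z))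
    (A : Submodule F P) (hab : IsAbelian mul br A)
    (hdim : Module.finrank F A + 1 = Module.finrank F P) :
    IsIdeal mul br A :=
  abelian_codim_one_isIdeal_general mul br hmul_ne hcomm hassoc hskew hleib A hab hdim
end

section
/- Over a field F of characteristic ≠ 2, the Lie algebra L₁(γ) with basis e₁, e₂, e₃ and brackets [e₁,e₂] = e₂, [e₁,e₃] = γe₂ − e₃, [e₂,e₃] = e₁ is isomorphic to sl₂(F), via the change of basis E₁ = e₁, E₂ = e₂, E₃ = −(γ/2)e₂ + e₃ giving [E₁,E₂] = E₂, [E₁,E₃] = −E₃, [E₂,E₃] = E₁. -/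
/-!
In the basis `E₁ = e₁, E₂ = e₂, E₃ = e₃ - (γ/2)e₂` the brackets of `L₁(γ)` become
`[E₁,E₂] = E₂, [E₁,E₃] = -E₃, [E₂,E₃] = E₁`. These are the relations of `H/2, X, Y/2` for the
standard basis `H, X, Y` of `sl₂` (`[H,X] = 2X, [H,Y] = -2Y, [X,Y] = H`), so `Eᵢ ↦ H/2, X, Y/2`
is a linear bijection preserving the brackets of basis vectors, hence a Lie algebra isomorphism.
Dividing by `2` is where the characteristic enters.
-/

theorem LinearMap.map_lie_of_basis {ι R L L' : Type*} [LinearOrder ι] [CommRing R]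
    [LieRing L] [LieAlgebra R L] [LieRing L'] [LieAlgebra R L']
    (b : Module.Basis ι R L) (f : L →ₗ[R] L')
    (h : ∀ i j, i < j → f ⁅b i, b j⁆ = ⁅f (b i), f (b j)⁆) (x y : L) :
    f ⁅x, y⁆ = ⁅f x, f y⁆ := by
  have hb : ∀ i j, f ⁅b i, b j⁆ = ⁅f (b i), f (b j)⁆ := by
    intro i j
    rcases lt_trichotomy i j with hij | rfl | hji
    · exact h i j hij
    · simp
    · rw [← lie_skew, map_neg, h j i hji, lie_skew]
  have hbilin := LinearMap.ext_basis (B := (LieAlgebra.ad R L : L →ₗ[R] Module.End R L).compr₂ f)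
    (B' := (LieAlgebra.ad R L' : L' →ₗ[R] Module.End R L').compl₁₂ f f) b b (by simpa using hb)
  simpa using LinearMap.congr_fun₂ hbilin x y

namespace LieAlgebra.SpecialLinear

variable (R : Type*) [CommRing R]

def slFinTwoEquivFun : sl (Fin 2) R ≃ₗ[R] (Fin 3 → R) where
  toFun A := ![A.1 0 0, A.1 0 1, A.1 1 0]
  invFun x := ⟨(!![x 0, x 1; x 2, -x 0] : Matrix (Fin 2) (Fin 2) R), by
    change Matrix.trace (_ : Matrix (Fin 2) (Fin 2) R) = 0
    simp [Matrix.trace_fin_two]⟩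
  map_add' A B := by ext i; fin_cases i <;> rfl
  map_smul' c A := by ext i; fin_cases i <;> rfl
  left_inv A := by
    have htr : A.1 1 1 = -A.1 0 0 := by
      have h : Matrix.trace A.1 = 0 := A.2
      rw [Matrix.trace_fin_two] at h
      linear_combination h
    ext i j
    fin_cases i <;> fin_cases j <;> simp [htr]
  right_inv x := by ext i; fin_cases i <;> rfl

noncomputable def slFinTwoBasis : Module.Basis (Fin 3) R (sl (Fin 2) R) :=
  .ofEquivFun (slFinTwoEquivFun R)

@[simp] theorem val_slFinTwoBasis_zero : (slFinTwoBasis R 0).1 = !![1, 0; 0, -1] := by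
  ext i j; fin_cases i <;> fin_cases j <;> simp [slFinTwoBasis, slFinTwoEquivFun]

@[simp] theorem val_slFinTwoBasis_one : (slFinTwoBasis R 1).1 = !![0, 1; 0, 0] := by
  ext i j; fin_cases i <;> fin_cases j <;> simp [slFinTwoBasis, slFinTwoEquivFun]

@[simp] theorem val_slFinTwoBasis_two : (slFinTwoBasis R 2).1 = !![0, 0; 1, 0] := by
  ext i j; fin_cases i <;> fin_cases j <;> simp [slFinTwoBasis, slFinTwoEquivFun]

theorem lie_slFinTwoBasis_zero_one :
    ⁅slFinTwoBasis R 0, slFinTwoBasis R 1⁆ = (2 : R) • slFinTwoBasis R 1 := by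
  ext i j; fin_cases i <;> fin_cases j <;> norm_num [Ring.lie_def]

theorem lie_slFinTwoBasis_zero_two :
    ⁅slFinTwoBasis R 0, slFinTwoBasis R 2⁆ = -((2 : R) • slFinTwoBasis R 2) := by
  ext i j; fin_cases i <;> fin_cases j <;> norm_num [Ring.lie_def]

theorem lie_slFinTwoBasis_one_two :
    ⁅slFinTwoBasis R 1, slFinTwoBasis R 2⁆ = slFinTwoBasis R 0 := by
  ext i j; fin_cases i <;> fin_cases j <;> norm_num [Ring.lie_def]

end LieAlgebra.SpecialLinear

section LOne

open LieAlgebra.SpecialLinear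

variable {F L : Type*} [Field F] [LieRing L] [LieAlgebra F L] {γ : F}
  {e : Module.Basis (Fin 3) F L}

/-- `E₁ ↦ H/2`, `E₂ ↦ X`, `E₃ ↦ Y/2`, written in the basis `e₃ = E₃ + (γ/2)E₂`. -/
noncomputable def lOneToSl (γ : F) (e : Module.Basis (Fin 3) F L) : L →ₗ[F] sl (Fin 2) F :=
  e.constr F ![(2⁻¹ : F) • slFinTwoBasis F 0, slFinTwoBasis F 1,
    (2⁻¹ : F) • slFinTwoBasis F 2 + (γ / 2) • slFinTwoBasis F 1]

noncomputable def slToLOne (γ : F) (e : Module.Basis (Fin 3) F L) : sl (Fin 2) F →ₗ[F] L :=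
  (slFinTwoBasis F).constr F ![(2 : F) • e 0, e 1, (2 : F) • e 2 - γ • e 1]

theorem slToLOne_comp_lOneToSl (h2 : (2 : F) ≠ 0) :
    slToLOne γ e ∘ₗ lOneToSl γ e = LinearMap.id := by
  refine e.ext fun i => ?_
  fin_cases i <;>
    simp only [lOneToSl, slToLOne, LinearMap.comp_apply, LinearMap.id_apply,
      Module.Basis.constr_basis, map_add, map_smul, Fin.zero_eta, Fin.mk_one, Fin.reduceFinMk,
      Matrix.cons_val] <;>
    match_scalars <;> grind

theorem lOneToSl_comp_slToLOne (h2 : (2 : F) ≠ 0) :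
    lOneToSl γ e ∘ₗ slToLOne γ e = LinearMap.id := by
  refine (slFinTwoBasis F).ext fun i => ?_
  fin_cases i <;>
    simp only [lOneToSl, slToLOne, LinearMap.comp_apply, LinearMap.id_apply,
      Module.Basis.constr_basis, map_sub, map_smul, Fin.zero_eta, Fin.mk_one, Fin.reduceFinMk,
      Matrix.cons_val] <;>
    match_scalars <;> grind

theorem lOneToSl_map_lie (h2 : (2 : F) ≠ 0)
    (h12 : ⁅e 0, e 1⁆ = e 1) (h13 : ⁅e 0, e 2⁆ = γ • e 1 - e 2) (h23 : ⁅e 1, e 2⁆ = e 0)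
    (x y : L) : lOneToSl γ e ⁅x, y⁆ = ⁅lOneToSl γ e x, lOneToSl γ e y⁆ := by
  refine (lOneToSl γ e).map_lie_of_basis e (fun i j hij => ?_) x y
  fin_cases i <;> fin_cases j <;> simp at hij <;>
    simp only [lOneToSl, Module.Basis.constr_basis, map_sub, map_smul, Fin.zero_eta, Fin.mk_one,
      Fin.reduceFinMk, Matrix.cons_val, h12, h13, h23, lie_add, lie_smul, smul_lie, lie_self,
      lie_slFinTwoBasis_zero_one, lie_slFinTwoBasis_zero_two, lie_slFinTwoBasis_one_two] <;>
    match_scalars <;> grind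

noncomputable def lOneEquivSl (h2 : (2 : F) ≠ 0) (h12 : ⁅e 0, e 1⁆ = e 1)
    (h13 : ⁅e 0, e 2⁆ = γ • e 1 - e 2) (h23 : ⁅e 1, e 2⁆ = e 0) : L ≃ₗ⁅F⁆ sl (Fin 2) F :=
  { lOneToSl γ e with
    map_lie' := lOneToSl_map_lie h2 h12 h13 h23 _ _
    invFun := slToLOne γ e
    left_inv := LinearMap.congr_fun (slToLOne_comp_lOneToSl h2)
    right_inv := LinearMap.congr_fun (lOneToSl_comp_slToLOne h2) }

end LOne

/-- Over a field of characteristic ≠ 2, the Lie algebra `L₁(γ)` with basis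
`e₁, e₂, e₃`, `[e₁,e₂] = e₂`, `[e₁,e₃] = γe₂ − e₃`, `[e₂,e₃] = e₁`, is
isomorphic to `sl₂(F)`, and the basis `E₁ = e₁`, `E₂ = e₂`,
`E₃ = −(γ/2)e₂ + e₃` satisfies `[E₁,E₂] = E₂`, `[E₁,E₃] = −E₃`,
`[E₂,E₃] = E₁`. -/
theorem L1_iso_sl2 {F : Type*} [Field F] (h2 : (2 : F) ≠ 0)
    {L : Type*} [LieRing L] [LieAlgebra F L]
    (γ : F) (e : Module.Basis (Fin 3) F L)
    (h12 : ⁅e 0, e 1⁆ = e 1)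
    (h13 : ⁅e 0, e 2⁆ = γ • e 1 - e 2)
    (h23 : ⁅e 1, e 2⁆ = e 0) :
    (⁅e 0, e 1⁆ = e 1 ∧
     ⁅e 0, -(γ / 2) • e 1 + e 2⁆ = -(-(γ / 2) • e 1 + e 2) ∧
     ⁅e 1, -(γ / 2) • e 1 + e 2⁆ = e 0) ∧
    Nonempty (L ≃ₗ⁅F⁆ LieAlgebra.SpecialLinear.sl (Fin 2) F) := by
  refine ⟨⟨h12, ?_, ?_⟩, ⟨lOneEquivSl h2 h12 h13 h23⟩⟩
  · rw [lie_add, lie_smul, h12, h13]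
    match_scalars <;> grind
  · rw [lie_add, lie_smul, lie_self, h23, smul_zero, zero_add]
end

section
/- Let P be a complex Poisson algebra whose underlying Lie algebra is the model filiform Lie algebra Lⁿ (n ≥ 3) with basis x₀,...,x_{n−1} and brackets [x₀, xᵢ] = x_{i+1} for 1 ≤ i ≤ n−2. Then the associative commutative product of P is determined by constants λ₁, λ₂, λ₃ ∈ ℂ with the only possibly nonzero products x₀x₀ = λ₁x_{n−1}, x₀x₁ = λ₂x_{n−1}, x₁x₁ = λ₃x_{n−1}. -/
/-!
Bracketing with `xᵢ` (`1 ≤ i ≤ n - 2`) is `u ↦ u₀ • xᵢ₊₁`, so the Leibniz rule for it reads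
`(uv)₀ xⱼ = u₀ (xⱼ v) + v₀ (u xⱼ)` for `j ≥ 2`. Taking `u = x₀` shows that every `xⱼ`, `j ≥ 2`, is a
common eigenvector of all multiplications: `xⱼ v = φ(v) xⱼ` with `φ = a v₀ + b v₁` independent of
`j`. Associativity makes `φ` a character. On the other hand `φ(u)` is the `x₂`-coordinate of
`[u, a x₁ - b x₀]`, and brackets land in the span of the `xⱼ`, `j ≥ 2`, on which `P` acts through
`φ`; so Leibniz gives `φ(uv) = 2 φ(u) φ(v)`. Hence `φ = 0`, all products with some `xⱼ`, `j ≥ 2`,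
vanish, every product is central by Leibniz once more, and the centre of `Lⁿ` is spanned by
`xₙ₋₁`.
-/

open Module

namespace ModelFiliform

variable {K P : Type*} [Field K] [AddCommGroup P] [Module K P]

theorem map_mul_of_mul_eq_smul {mul : P →ₗ[K] P →ₗ[K] P}
    (hassoc : ∀ u v w, mul (mul u v) w = mul u (mul v w)) {z : P} (hz : z ≠ 0)
    {φ : P →ₗ[K] K} (hφ : ∀ v, mul z v = φ v • z) (u v : P) :
    φ (mul u v) = φ u * φ v :=
  smul_left_injective K hz <| by
    dsimp only
    rw [← hφ, ← hassoc, hφ, map_smul, LinearMap.smul_apply, hφ, smul_smul]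

theorem apply_eq_smul_of_basis {ι : Type*} (x : Basis ι K P) {f : P →ₗ[K] P} {φ : P →ₗ[K] K}
    {z : P} (h : ∀ m, f (x m) = φ (x m) • z) (v : P) : f v = φ v • z :=
  LinearMap.congr_fun (x.ext (f₁ := f) (f₂ := φ.smulRight z) h) v

variable {n : ℕ}

def IsModelFiliform (br : P →ₗ[K] P →ₗ[K] P) (x : Basis (Fin n) K P) : Prop :=
  ∀ i j : Fin n, br (x i) (x j) =
    if h : i.1 = 0 ∧ 1 ≤ j.1 ∧ j.1 ≤ n - 2 then x ⟨j.1 + 1, by omega⟩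
    else if h' : j.1 = 0 ∧ 1 ≤ i.1 ∧ i.1 ≤ n - 2 then -x ⟨i.1 + 1, by omega⟩
    else 0

namespace IsModelFiliform

variable {br : P →ₗ[K] P →ₗ[K] P} {x : Basis (Fin n) K P}

theorem br_basis_eq_coord_zero_smul (hbr : IsModelFiliform br x) {i : Fin n} (hi₁ : 1 ≤ i.1)
    (hi₂ : i.1 ≤ n - 2) (v : P) :
    br v (x i) = x.coord ⟨0, by omega⟩ v • x ⟨i.1 + 1, by omega⟩ :=
  apply_eq_smul_of_basis x (f := br.flip (x i)) (fun m => by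
    rw [LinearMap.flip_apply, hbr m i]
    rcases m with ⟨_ | m, hm⟩
    · simp [hi₁, hi₂, Basis.coord_apply]
    · rw [dif_neg (by simp), dif_neg (by omega)]
      simp [Basis.coord_apply]) v

theorem coord_succ_br_basis_zero (hbr : IsModelFiliform br x) {k : Fin n} (hk₁ : 1 ≤ k.1)
    (hk₂ : k.1 ≤ n - 2) (v : P) :
    x.coord ⟨k.1 + 1, by omega⟩ (br v (x ⟨0, by omega⟩)) = -x.coord k v := by
  refine LinearMap.congr_fun (f := x.coord ⟨k.1 + 1, by omega⟩ ∘ₗ br.flip (x ⟨0, by omega⟩))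
    (g := -x.coord k) (x.ext fun m => ?_) v
  rw [LinearMap.comp_apply, LinearMap.flip_apply, hbr m, dif_neg (by simp)]
  by_cases hm : 1 ≤ m.1 ∧ m.1 ≤ n - 2
  · simp [hm, Basis.coord_apply, Finsupp.single_apply, Fin.ext_iff]
  · have hmk : m ≠ k := fun h => hm (h ▸ ⟨hk₁, hk₂⟩)
    simp [hm, Basis.coord_apply, hmk]

variable {mul : P →ₗ[K] P →ₗ[K] P}

theorem coord_zero_mul_smul (hbr : IsModelFiliform br x)
    (hleib : ∀ u v w, br (mul u v) w = mul (br u w) v + mul u (br v w))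
    {j : Fin n} (hj : 2 ≤ j.1) (u v : P) :
    x.coord ⟨0, by omega⟩ (mul u v) • x j =
      x.coord ⟨0, by omega⟩ u • mul (x j) v + x.coord ⟨0, by omega⟩ v • mul u (x j) := by
  have hsucc : (⟨j.1 - 1 + 1, by omega⟩ : Fin n) = j := Fin.ext (by simp only; omega)
  simpa only [hbr.br_basis_eq_coord_zero_smul (i := ⟨j.1 - 1, by omega⟩) (by simp only; omega)
    (by simp only; omega), hsucc, map_smul, LinearMap.smul_apply]
    using hleib u v (x ⟨j.1 - 1, by omega⟩)

theorem exists_mul_basis_eq_smul (hn : 2 < n) (h2 : (2 : K) ≠ 0) (hbr : IsModelFiliform br x)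
    (hcomm : ∀ u v, mul u v = mul v u)
    (hleib : ∀ u v w, br (mul u v) w = mul (br u w) v + mul u (br v w)) :
    ∃ a b : K, ∀ j : Fin n, 2 ≤ j.1 → ∀ v,
      mul (x j) v = (a • x.coord ⟨0, by omega⟩ + b • x.coord ⟨1, by omega⟩) v • x j := by
  have hj0 : ∀ j : Fin n, 2 ≤ j.1 → mul (x j) (x ⟨0, by omega⟩) =
      (x.coord ⟨0, by omega⟩ (mul (x ⟨0, by omega⟩) (x ⟨0, by omega⟩)) / 2) • x j := by
    intro j hj
    have := hbr.coord_zero_mul_smul hleib hj (x ⟨0, by omega⟩) (x ⟨0, by omega⟩)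
    simp only [hcomm _ (x j), ← add_smul, Basis.coord_apply, x.repr_self,
      Finsupp.single_eq_same, one_add_one_eq_two] at this
    rw [Basis.coord_apply, div_eq_inv_mul, mul_smul, this, inv_smul_smul₀ h2]
  refine ⟨x.coord ⟨0, by omega⟩ (mul (x ⟨0, by omega⟩) (x ⟨0, by omega⟩)) / 2,
    x.coord ⟨0, by omega⟩ (mul (x ⟨0, by omega⟩) (x ⟨1, by omega⟩)), fun j hj =>
    apply_eq_smul_of_basis x fun m => ?_⟩
  have hjm := hbr.coord_zero_mul_smul hleib hj (x ⟨0, by omega⟩) (x m)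
  rw [hcomm _ (x j)] at hjm
  rcases m with ⟨_ | _ | k, hm⟩
  · simp [hj0 j hj, Basis.coord_apply]
  · simpa [Basis.coord_apply] using hjm.symm
  · have : x.coord ⟨0, by omega⟩ (mul (x ⟨0, by omega⟩) (x ⟨k + 2, hm⟩)) = 0 := by
      rw [hcomm, hj0 _ (by simp)]
      simp [Basis.coord_apply]
    simpa [Basis.coord_apply, this] using hjm.symm

theorem mul_br_eq_smul (hbr : IsModelFiliform br x) {φ : P →ₗ[K] K}
    (heig : ∀ j : Fin n, 2 ≤ j.1 → ∀ v, mul (x j) v = φ v • x j) (u w v : P) :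
    mul (br u w) v = φ v • br u w := by
  have : br.compr₂ (mul.flip v) = φ v • br := LinearMap.ext_basis x x fun a b => by
    simp only [LinearMap.compr₂_apply, LinearMap.flip_apply, LinearMap.smul_apply, hbr a b]
    split_ifs with h h'
    · exact heig _ (by simp only; omega) v
    · rw [map_neg, LinearMap.neg_apply, heig _ (by simp only; omega), smul_neg]
    · simp
  exact LinearMap.congr_fun₂ this u w

theorem coord_two_br_sub (hn : 2 < n) (hbr : IsModelFiliform br x) (a b : K) (v : P) :
    x.coord ⟨2, by omega⟩ (br v (a • x ⟨1, by omega⟩ - b • x ⟨0, by omega⟩)) =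
      (a • x.coord ⟨0, by omega⟩ + b • x.coord ⟨1, by omega⟩) v := by
  have h1 : br v (x ⟨1, by omega⟩) = x.coord ⟨0, by omega⟩ v • x ⟨2, by omega⟩ :=
    hbr.br_basis_eq_coord_zero_smul (i := ⟨1, by omega⟩) le_rfl (by simp only; omega) v
  have h0 : x.coord ⟨2, by omega⟩ (br v (x ⟨0, by omega⟩)) = -x.coord ⟨1, by omega⟩ v :=
    hbr.coord_succ_br_basis_zero (k := ⟨1, by omega⟩) le_rfl (by simp only; omega) v
  simp only [map_sub, map_smul, h1, h0]
  simp [Basis.coord_apply]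

theorem mul_basis_eq_zero (hn : 2 < n) (h2 : (2 : K) ≠ 0) (hbr : IsModelFiliform br x)
    (hcomm : ∀ u v, mul u v = mul v u) (hassoc : ∀ u v w, mul (mul u v) w = mul u (mul v w))
    (hleib : ∀ u v w, br (mul u v) w = mul (br u w) v + mul u (br v w))
    {j : Fin n} (hj : 2 ≤ j.1) (v : P) : mul (x j) v = 0 := by
  obtain ⟨a, b, heig⟩ := exists_mul_basis_eq_smul hn h2 hbr hcomm hleib
  set φ := a • x.coord ⟨0, by omega⟩ + b • x.coord ⟨1, by omega⟩ with hφ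
  have hchar : ∀ u v, φ (mul u v) = φ u * φ v :=
    map_mul_of_mul_eq_smul hassoc (x.ne_zero ⟨2, by omega⟩) (heig ⟨2, by omega⟩ le_rfl)
  have hder : ∀ u v, φ (mul u v) = 2 * (φ u * φ v) := by
    intro u v
    simp only [hφ, ← hbr.coord_two_br_sub hn a b]
    rw [hleib, mul_br_eq_smul hbr heig, hcomm u, mul_br_eq_smul hbr heig]
    simp only [map_add, map_smul, hφ, ← hbr.coord_two_br_sub hn a b, smul_eq_mul]
    ring
  have hzero : φ v = 0 :=
    mul_self_eq_zero.mp (by linear_combination (hder v v).symm.trans (hchar v v))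
  rw [heig j hj, hzero, zero_smul]

theorem br_mul_eq_zero (hn : 2 < n) (h2 : (2 : K) ≠ 0) (hbr : IsModelFiliform br x)
    (hcomm : ∀ u v, mul u v = mul v u) (hassoc : ∀ u v w, mul (mul u v) w = mul u (mul v w))
    (hleib : ∀ u v w, br (mul u v) w = mul (br u w) v + mul u (br v w)) (u v w : P) :
    br (mul u v) w = 0 := by
  have heig : ∀ j : Fin n, 2 ≤ j.1 → ∀ v, mul (x j) v = (0 : P →ₗ[K] K) v • x j :=
    fun j hj v => by
      rw [mul_basis_eq_zero hn h2 hbr hcomm hassoc hleib hj, LinearMap.zero_apply, zero_smul]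
  rw [hleib, hcomm u, mul_br_eq_smul hbr heig, mul_br_eq_smul hbr heig]
  simp

theorem eq_coord_last_smul_of_forall_br_eq_zero (hn : 2 < n) (hbr : IsModelFiliform br x)
    {z : P} (hz : ∀ w, br z w = 0) : z = x.coord ⟨n - 1, by omega⟩ z • x ⟨n - 1, by omega⟩ := by
  refine x.ext_elem fun ⟨k, hk⟩ => ?_
  simp only [map_smul, Basis.repr_self, Finsupp.smul_apply, Finsupp.single_apply, Fin.mk.injEq,
    Basis.coord_apply, smul_eq_mul]
  by_cases hkl : n - 1 = k
  · simp [hkl]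
  rw [if_neg hkl, mul_zero]
  rcases k with _ | k
  · have := hbr.br_basis_eq_coord_zero_smul (i := ⟨1, by omega⟩) le_rfl (by simp only; omega) z
    rw [hz, eq_comm, smul_eq_zero] at this
    simpa [x.ne_zero, Basis.coord_apply] using this
  · have := hbr.coord_succ_br_basis_zero (k := ⟨k + 1, hk⟩) (by simp) (by simp only; omega) z
    simpa [hz, Basis.coord_apply] using this.symm

end IsModelFiliform
end ModelFiliform

/-- On a complex Poisson algebra whose Lie part is the model filiform Lie
algebra `Lⁿ` (`n ≥ 3`), the commutative product is given, for some
`λ₁, λ₂, λ₃ ∈ ℂ`, by `x₀x₀ = λ₁x_{n−1}`, `x₀x₁ = λ₂x_{n−1}`,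
`x₁x₁ = λ₃x_{n−1}`, all other basis products being zero. -/
theorem poisson_model_filiform
    {P : Type*} [AddCommGroup P] [Module ℂ P]
    (n : ℕ) (hn : 3 ≤ n)
    (mul br : P →ₗ[ℂ] P →ₗ[ℂ] P)
    (hcomm : ∀ u v, mul u v = mul v u)
    (hassoc : ∀ u v w, mul (mul u v) w = mul u (mul v w))
    (hleib : ∀ u v w, br (mul u v) w = mul (br u w) v + mul u (br v w))
    (x : Module.Basis (Fin n) ℂ P)
    (hbr : ∀ i j : Fin n, br (x i) (x j) =
      if h : i.1 = 0 ∧ 1 ≤ j.1 ∧ j.1 ≤ n - 2 then x ⟨j.1 + 1, by omega⟩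
      else if h' : j.1 = 0 ∧ 1 ≤ i.1 ∧ i.1 ≤ n - 2 then -x ⟨i.1 + 1, by omega⟩
      else 0) :
    ∃ l1 l2 l3 : ℂ,
      mul (x ⟨0, by omega⟩) (x ⟨0, by omega⟩) = l1 • x ⟨n - 1, by omega⟩ ∧
      mul (x ⟨0, by omega⟩) (x ⟨1, by omega⟩) = l2 • x ⟨n - 1, by omega⟩ ∧
      mul (x ⟨1, by omega⟩) (x ⟨1, by omega⟩) = l3 • x ⟨n - 1, by omega⟩ ∧
      ∀ i j : Fin n, ¬(i.1 ≤ 1 ∧ j.1 ≤ 1) → mul (x i) (x j) = 0 := by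
  have hbr' : ModelFiliform.IsModelFiliform br x := hbr
  have hzero : ∀ j : Fin n, 2 ≤ j.1 → ∀ v, mul (x j) v = 0 :=
    fun j hj => hbr'.mul_basis_eq_zero hn two_ne_zero hcomm hassoc hleib hj
  have hlast : ∀ u v, mul u v = x.coord ⟨n - 1, by omega⟩ (mul u v) • x ⟨n - 1, by omega⟩ :=
    fun u v => hbr'.eq_coord_last_smul_of_forall_br_eq_zero hn
      (hbr'.br_mul_eq_zero hn two_ne_zero hcomm hassoc hleib u v)
  refine ⟨_, _, _, hlast _ _, hlast _ _, hlast _ _, fun i j hij => ?_⟩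
  rcases le_or_gt 2 i.1 with hi | hi
  · exact hzero i hi (x j)
  · rw [hcomm]
    exact hzero j (by omega) (x i)
end

section
/- The n-dimensional complex Poisson algebra P₀ⁿ with basis e₁,...,eₙ, commutative product eᵢ·eⱼ = e_{i+j} (for 2 ≤ i+j ≤ n, zero otherwise) and zero Lie bracket satisfies α(P₀ⁿ) = β(P₀ⁿ) = ⌈n/2⌉: the span of {e_k : k > n/2} is an abelian ideal of maximal dimension ⌈n/2⌉, and no abelian subalgebra has larger dimension. -/
open Finset in
lemma finIcoCard_aux (n a b : ℕ) (hb : b ≤ n) :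
    ({x : Fin n | a ≤ x.1 ∧ x.1 < b} : Set (Fin n)).ncard = b - a := by
  classical
  rw [Set.ncard_eq_toFinset_card', ← Nat.card_Ico a b]
  refine Finset.card_bij' (fun x _ => x.1) (fun m hm => ⟨m, by
    have := (Finset.mem_Ico.1 hm).2; omega⟩) ?_ ?_ ?_ ?_
  · intro x hx
    simp only [Set.mem_toFinset, Set.mem_setOf_eq] at hx
    exact Finset.mem_Ico.2 hx
  · intro m hm
    have := Finset.mem_Ico.1 hm
    simp only [Set.mem_toFinset, Set.mem_setOf_eq]
    exact this
  · intro x hx; rfl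
  · intro m hm; rfl

/-- For the null-filiform associative commutative (Poisson, with trivial
bracket) algebra `P₀ⁿ`, the span of `{e_k : k > n/2}` is an abelian ideal of
dimension `⌈n/2⌉`, and no abelian subalgebra has larger dimension; hence
`α(P₀ⁿ) = β(P₀ⁿ) = ⌈n/2⌉`. -/
theorem nullFiliform_alpha_beta
    {P : Type*} [AddCommGroup P] [Module ℂ P]
    (n : ℕ) (hn : 1 ≤ n)
    (mul : P →ₗ[ℂ] P →ₗ[ℂ] P)
    (e : Module.Basis (Fin n) ℂ P)
    (hmul : ∀ i j : Fin n, mul (e i) (e j) =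
      if h : i.1 + j.1 + 2 ≤ n then e ⟨i.1 + j.1 + 1, by omega⟩ else 0) :
    (∀ x ∈ Submodule.span ℂ {v | ∃ a : Fin n, n < 2 * (a.1 + 1) ∧ v = e a},
      ∀ y ∈ Submodule.span ℂ {v | ∃ a : Fin n, n < 2 * (a.1 + 1) ∧ v = e a},
      mul x y = 0) ∧
    (∀ x ∈ Submodule.span ℂ {v | ∃ a : Fin n, n < 2 * (a.1 + 1) ∧ v = e a},
      ∀ y : P,
      mul x y ∈ Submodule.span ℂ {v | ∃ a : Fin n, n < 2 * (a.1 + 1) ∧ v = e a} ∧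
      mul y x ∈ Submodule.span ℂ {v | ∃ a : Fin n, n < 2 * (a.1 + 1) ∧ v = e a}) ∧
    Module.finrank ℂ
      (Submodule.span ℂ {v | ∃ a : Fin n, n < 2 * (a.1 + 1) ∧ v = e a}) =
      (n + 1) / 2 ∧
    (∀ T : Submodule ℂ P, (∀ x ∈ T, ∀ y ∈ T, mul x y = 0) →
      Module.finrank ℂ T ≤ (n + 1) / 2) := by
  classical
  set S : Set (Fin n) := {a | n < 2 * (a.1 + 1)} with hS
  have hset : {v | ∃ a : Fin n, n < 2 * (a.1 + 1) ∧ v = e a} = e '' S := by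
    ext v; constructor
    · rintro ⟨a, ha, rfl⟩; exact ⟨a, ha, rfl⟩
    · rintro ⟨a, ha, rfl⟩; exact ⟨a, ha, rfl⟩
  rw [hset]
  set I := Submodule.span ℂ (e '' S) with hI
  -- generators multiply into I
  have key : ∀ i j : Fin n, i ∈ S ∨ j ∈ S → mul (e i) (e j) ∈ I := by
    intro i j hij
    rw [hmul]
    split_ifs with h
    · apply Submodule.subset_span
      refine ⟨⟨i.1 + j.1 + 1, by omega⟩, ?_, rfl⟩
      simp only [S, Set.mem_setOf_eq] at hij ⊢
      omega
    · exact Submodule.zero_mem _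
  -- part 2 (ideal property)
  have ideal : ∀ x ∈ I, ∀ y : P, mul x y ∈ I ∧ mul y x ∈ I := by
    intro x hx y
    constructor
    · have h : I ≤ Submodule.comap (mul.flip y) I := by
        rw [hI, Submodule.span_le]
        rintro v ⟨a, ha, rfl⟩
        have hy : (⊤ : Submodule ℂ P) ≤ Submodule.comap (mul (e a)) I := by
          rw [← e.span_eq, Submodule.span_le]
          rintro w ⟨b, rfl⟩
          exact key a b (Or.inl ha)
        exact hy Submodule.mem_top
      exact h hx
    · have h : I ≤ Submodule.comap (mul y) I := by
        rw [hI, Submodule.span_le]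
        rintro v ⟨a, ha, rfl⟩
        have hy : (⊤ : Submodule ℂ P) ≤ Submodule.comap (mul.flip (e a)) I := by
          rw [← e.span_eq, Submodule.span_le]
          rintro w ⟨b, rfl⟩
          exact key b a (Or.inr ha)
        exact hy Submodule.mem_top
      exact h hx
  -- part 1 (abelian)
  have abelian : ∀ x ∈ I, ∀ y ∈ I, mul x y = 0 := by
    intro x hx y hy
    have h1 : ∀ a : Fin n, a ∈ S → mul (e a) y = 0 := by
      intro a ha
      have h : I ≤ LinearMap.ker (mul (e a)) := by
        rw [hI, Submodule.span_le]
        rintro v ⟨b, hb, rfl⟩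
        rw [SetLike.mem_coe, LinearMap.mem_ker, hmul, dif_neg]
        simp only [S, Set.mem_setOf_eq] at ha hb
        omega
      exact h hy
    have h : I ≤ LinearMap.ker (mul.flip y) := by
      rw [hI, Submodule.span_le]
      rintro v ⟨a, ha, rfl⟩
      exact h1 a ha
    exact h hx
  -- part 3 (dimension)
  haveI : Fintype S := (Set.toFinite S).fintype
  haveI : Fintype ↑(e '' S) := (Set.toFinite _).fintype
  have hScard : S.ncard = (n + 1) / 2 := by
    have heq : S = {x : Fin n | n / 2 ≤ x.1 ∧ x.1 < n} := by
      ext x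
      have := x.2
      simp only [S, Set.mem_setOf_eq]
      omega
    rw [heq, finIcoCard_aux n (n / 2) n le_rfl]
    omega
  have hli : LinearIndependent ℂ (Subtype.val : (e '' S) → P) :=
    LinearIndepOn.mono ((linearIndepOn_id_range_iff e.injective).2 e.linearIndependent)
      (Set.image_subset_range e S)
  have dimI : Module.finrank ℂ I = (n + 1) / 2 := by
    rw [hI, finrank_span_set_eq_card hli, ← hScard,
      ← Set.ncard_eq_toFinset_card', Set.ncard_image_of_injective S e.injective]
  refine ⟨abelian, ideal, dimI, ?_⟩
  -- part 4 (upper bound)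
  intro T hT
  by_contra hlt
  push_neg at hlt
  set Sm : Set (Fin n) := {a | a.1 < n / 2} with hSm
  haveI : Fintype Sm := (Set.toFinite Sm).fintype
  haveI : Fintype ↑(e '' Sm) := (Set.toFinite _).fintype
  set W := Submodule.span ℂ (e '' Sm) with hW
  have hliW : LinearIndependent ℂ (Subtype.val : (e '' Sm) → P) :=
    LinearIndepOn.mono ((linearIndepOn_id_range_iff e.injective).2 e.linearIndependent)
      (Set.image_subset_range e Sm)
  have dimW : Module.finrank ℂ W = n / 2 := by
    rw [hW, finrank_span_set_eq_card hliW, ← Set.ncard_eq_toFinset_card',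
      Set.ncard_image_of_injective Sm e.injective]
    have heq : Sm = {x : Fin n | 0 ≤ x.1 ∧ x.1 < n / 2} := by
      ext x
      simp only [Sm, Set.mem_setOf_eq]
      omega
    rw [heq, finIcoCard_aux n 0 (n / 2) (by omega)]
    omega
  haveI : FiniteDimensional ℂ P := Module.Finite.of_basis e
  have hdimP : Module.finrank ℂ P = n := by
    rw [Module.finrank_eq_card_basis e, Fintype.card_fin]
  have hnz : ∃ x ∈ T ⊓ W, x ≠ 0 := by
    by_contra hno
    push_neg at hno
    have hbot : T ⊓ W = ⊥ := by
      rw [Submodule.eq_bot_iff]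
      intro x hx
      by_contra hx0
      exact hx0 (hno x hx)
    have hsum := Submodule.finrank_sup_add_finrank_inf_eq T W
    rw [hbot] at hsum
    simp only [finrank_bot, add_zero] at hsum
    have hle : Module.finrank ℂ (T ⊔ W : Submodule ℂ P) ≤ n := by
      rw [← hdimP]; exact Submodule.finrank_le _
    omega
  obtain ⟨x, ⟨hxT, hxW⟩, hx0⟩ := hnz
  set c := e.repr x with hc
  have hsupp : ↑c.support ⊆ Sm := (Module.Basis.mem_span_image e).1 hxW
  have hsne : c.support.Nonempty := by
    rw [Finsupp.support_nonempty_iff]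
    intro h
    exact hx0 (by rwa [← e.repr.map_eq_zero_iff, ← hc])
  set k := c.support.min' hsne with hk
  have hkS : k ∈ c.support := c.support.min'_mem hsne
  have hkSm : k.1 < n / 2 := hsupp hkS
  have hck : c k ≠ 0 := Finsupp.mem_support_iff.1 hkS
  have h2k : 2 * k.1 + 2 ≤ n := by omega
  set t : Fin n := ⟨2 * k.1 + 1, by omega⟩ with ht
  have hxsum : x = ∑ i : Fin n, c i • e i := (e.sum_repr x).symm
  have expand : mul x x = ∑ i : Fin n, ∑ j : Fin n, (c i * c j) • mul (e i) (e j) := by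
    conv_lhs => rw [hxsum]
    simp only [map_sum, LinearMap.sum_apply, map_smul, LinearMap.smul_apply,
      Finset.smul_sum, smul_smul]
    rw [Finset.sum_comm]
    exact Finset.sum_congr rfl fun i _ => Finset.sum_congr rfl fun j _ => by
      rw [mul_comm]
  have hval : (e.repr (mul x x)) t = ∑ i : Fin n, ∑ j : Fin n,
      (c i * c j) * ((e.repr (mul (e i) (e j))) t) := by
    rw [expand, map_sum, Finsupp.finset_sum_apply]
    refine Finset.sum_congr rfl fun i _ => ?_
    rw [map_sum, Finsupp.finset_sum_apply]
    refine Finset.sum_congr rfl fun j _ => ?_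
    rw [map_smul, Finsupp.smul_apply, smul_eq_mul]
  have hterm : ∀ i j : Fin n, (c i * c j) * ((e.repr (mul (e i) (e j))) t) =
      if i = k ∧ j = k then c k * c k else 0 := by
    intro i j
    by_cases hik : i = k ∧ j = k
    · obtain ⟨rfl, rfl⟩ := hik
      rw [if_pos ⟨rfl, rfl⟩, hmul, dif_pos (by omega : k.1 + k.1 + 2 ≤ n),
        e.repr_self, Finsupp.single_apply, if_pos (Fin.ext (by simp [ht]; omega))]
      ring
    · rw [if_neg hik]
      by_cases hci : c i = 0
      · simp [hci]
      by_cases hcj : c j = 0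
      · simp [hcj]
      have hki : k.1 ≤ i.1 := c.support.min'_le i (Finsupp.mem_support_iff.2 hci)
      have hkj : k.1 ≤ j.1 := c.support.min'_le j (Finsupp.mem_support_iff.2 hcj)
      have hne : i.1 + j.1 ≠ 2 * k.1 := by
        intro habs
        exact hik ⟨Fin.ext (by omega), Fin.ext (by omega)⟩
      rw [hmul]
      split_ifs with h
      · rw [e.repr_self, Finsupp.single_apply, if_neg, mul_zero]
        intro habs
        have : i.1 + j.1 + 1 = 2 * k.1 + 1 := by
          simpa [ht] using congrArg Fin.val habs
        omega
      · simp
  have hzero : mul x x = 0 := hT x hxT x hxT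
  have hfinal : (0 : ℂ) = c k * c k := by
    have h0 : (e.repr (mul x x)) t = 0 := by rw [hzero]; simp
    rw [hval] at h0
    rw [← h0]
    rw [Finset.sum_congr rfl fun i _ => Finset.sum_congr rfl fun j _ => hterm i j]
    rw [Finset.sum_eq_single k]
    · rw [Finset.sum_eq_single k]
      · rw [if_pos ⟨rfl, rfl⟩]
      · intro j _ hj
        rw [if_neg (by tauto)]
      · intro hk'; exact absurd (Finset.mem_univ k) hk'
    · intro i _ hi
      exact Finset.sum_eq_zero fun j _ => by rw [if_neg (by tauto)]
    · intro hk'; exact absurd (Finset.mem_univ k) hk'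
  exact hck (mul_self_eq_zero.1 hfinal.symm)
end
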